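/- arXiv:1704.02969 — 4 statements merged into one kernel-verified Lean document; each statement's English description precedes it below -/
import Mathlib

section
/- For every ε > 0 there exist a constant δ_ε > 0, a probability space (T, m), and a real-valued orthonormal sequence (φ_n)_{n≥1} in L²(T, m) which is a martingale difference sequence with respect to some filtration, such that: (i) ‖φ_n‖_∞ ≤ 1 + ε for all n; (ii) for every finitely supported sequence of real numbers (x_n), E exp(Σ x_n φ_n) ≤ exp((1+ε)² Σ x_n² / 2); and (iii) for every n ≥ 1, the smallest constant C_n such that Σ_{k=1}^n |x_k| ≤ C_n ‖Σ_{k=1}^n x_k φ_k‖_∞ holds for all scalar coefficients (x_k) satisfies C_n ≥ δ_ε √n. -/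
/-!
The example is a stopped Rademacher walk. Let `c = 1 + ε`, `L = c² / (c² - 1)` and let `r_k` be
independent fair signs. Put `S_0 = 0` and `S_{k+1} = S_k + a_k 1_{A_k} r_{k+1}`, where
`A_k = {S_k² ≤ L (k + 1)}` and `a_k = m(A_k)^{-1/2}`; the increments `φ_n = S_n - S_{n-1}` are
martingale differences, and `E φ_n² = a_k² m(A_k) ≤ 1` gives `E S_k² ≤ k`. Chebyshev then yields
`m(A_k) ≥ 1 - 1/L = c⁻²`, so `E φ_n² = 1` and `|φ_n| ≤ a_k ≤ c`, and the subgaussian bound follows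
by integrating out one sign at a time using `cosh y ≤ exp (y² / 2)`. Since the walk only moves
while it is inside the parabola, `|φ_1 + ⋯ + φ_n| ≤ √(L n) + c`, whereas the Sidon inequality for
`x_1 = ⋯ = x_n = 1` says `n ≤ C_n ‖φ_1 + ⋯ + φ_n‖_∞`.
-/

open MeasureTheory ProbabilityTheory Finset Real

lemma abs_sinh_le_cosh (x : ℝ) : |sinh x| ≤ cosh x := by
  rw [abs_sinh, ← cosh_abs]
  exact (sinh_lt_cosh _).le

lemma exp_mul_eq_cosh_add_sinh_mul {r : ℝ} (hr : r = 1 ∨ r = -1) (y : ℝ) :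
    exp (y * r) = cosh y + sinh y * r := by
  rcases hr with rfl | rfl
  · simp [cosh_add_sinh]
  · simp [← sub_eq_add_neg, cosh_sub_sinh]

lemma eLpNorm_top_le_of_abs_le {T : Type*} [MeasurableSpace T] {m : Measure T} {f : T → ℝ}
    {C : ℝ} (h : ∀ t, |f t| ≤ C) : eLpNorm f ⊤ m ≤ ENNReal.ofReal C :=
  eLpNorm_exponent_top.trans_le (eLpNormEssSup_le_of_ae_bound (ae_of_all _ h))

lemma natCast_le_mul_of_sidon {T : Type*} [MeasurableSpace T] {m : Measure T}
    {φ : ℕ → T → ℝ} {n : ℕ} (hn : 1 ≤ n) {B C : ℝ}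
    (hB : eLpNorm (fun t => ∑ k ∈ Icc 1 n, φ k t) ⊤ m ≤ ENNReal.ofReal B)
    (hC : ∀ x : ℕ → ℝ, ENNReal.ofReal (∑ k ∈ Icc 1 n, |x k|)
      ≤ ENNReal.ofReal C * eLpNorm (fun t => ∑ k ∈ Icc 1 n, x k * φ k t) ⊤ m) :
    (n : ℝ) ≤ C * B := by
  have h : ENNReal.ofReal (∑ k ∈ Icc 1 n, |(1 : ℝ)|) ≤ ENNReal.ofReal C * ENNReal.ofReal B :=
    (hC fun _ => 1).trans (by simp_rw [one_mul]; gcongr)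
  simp only [abs_one, sum_const, Nat.card_Icc, add_tsub_cancel_right, nsmul_eq_mul, mul_one] at h
  rcases le_or_gt C 0 with hC0 | hC0
  · rw [ENNReal.ofReal_of_nonpos hC0, zero_mul, nonpos_iff_eq_zero, ENNReal.ofReal_eq_zero] at h
    exact absurd h (by exact_mod_cast Nat.not_le.2 hn)
  · rw [← ENNReal.ofReal_mul hC0.le] at h
    exact (ENNReal.ofReal_le_ofReal_iff'.1 h).resolve_right
      (by exact_mod_cast Nat.not_le.2 hn)

lemma inv_add_mul_sqrt_le {a b C : ℝ} {n : ℕ} (ha : 0 ≤ a) (hb : 0 ≤ b) (hn : 1 ≤ n)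
    (h : (n : ℝ) ≤ C * (√(a * n) + b)) : (√a + b)⁻¹ * √n ≤ C := by
  have hn1 : 1 ≤ √(n : ℝ) := one_le_sqrt.2 (by exact_mod_cast hn)
  have hsq : √(n : ℝ) * √n = n := mul_self_sqrt n.cast_nonneg
  have hB : √(a * n) + b ≤ (√a + b) * √n := by
    rw [sqrt_mul ha]
    nlinarith
  have hC0 : 0 < C := by
    by_contra! hC0
    nlinarith [sqrt_nonneg (a * n)]
  have hkey : √(n : ℝ) * √n ≤ C * (√a + b) * √n := by
    nlinarith [mul_le_mul_of_nonneg_left hB hC0.le]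
  have hle := le_of_mul_le_mul_right hkey (by positivity)
  have hab : 0 < √a + b := pos_of_mul_pos_right (by linarith) hC0.le
  rw [inv_mul_le_iff₀ hab, mul_comm]
  exact hle

namespace SubgaussianNotSidon

noncomputable section

abbrev Ω := ℕ → Bool

def boolSign (b : Bool) : ℝ := if b then 1 else -1

def coin : Measure Bool := bernoulliMeasure true false ⟨1 / 2, by norm_num, by norm_num⟩

instance : IsProbabilityMeasure coin := by unfold coin; infer_instance

def P : Measure Ω := Measure.infinitePi fun _ => coin

instance : IsProbabilityMeasure P := by unfold P; infer_instance

def rad (k : ℕ) (ω : Ω) : ℝ := boolSign (ω k)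

lemma rad_eq_one_or_neg_one (k : ℕ) (ω : Ω) : rad k ω = 1 ∨ rad k ω = -1 := by
  unfold rad boolSign; split_ifs <;> simp

lemma abs_rad (k : ℕ) (ω : Ω) : |rad k ω| = 1 := by
  rcases rad_eq_one_or_neg_one k ω with h | h <;> simp [h]

lemma rad_sq (k : ℕ) (ω : Ω) : rad k ω ^ 2 = 1 := by
  rw [← sq_abs, abs_rad, one_pow]

lemma stronglyMeasurable_rad (k : ℕ) : StronglyMeasurable (rad k) :=
  ((measurable_of_countable boolSign).comp (measurable_pi_apply k)).stronglyMeasurable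

lemma iIndepFun_rad : iIndepFun rad P :=
  iIndepFun_infinitePi (X := fun _ => boolSign) fun _ => measurable_of_countable boolSign

lemma integral_rad (k : ℕ) : ∫ ω, rad k ω ∂P = 0 := by
  change ∫ ω, boolSign (ω k) ∂P = 0
  rw [← integral_map (measurable_pi_apply k).aemeasurable
    (measurable_of_countable boolSign).aestronglyMeasurable, P, Measure.infinitePi_map_eval,
    coin, integral_bernoulliMeasure]
  norm_num [boolSign]

-- `ℱ k = σ(rad 0, …, rad k)`; the walk moves with `rad (k + 1)` at time `k`, so `rad 0` is
-- never used and `ℱ (n - 1)` is the past of the `n`-th increment.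
def ℱ : Filtration ℕ (inferInstance : MeasurableSpace Ω) :=
  Filtration.natural rad stronglyMeasurable_rad

lemma measurable_rad (k : ℕ) : Measurable[ℱ k] (rad k) :=
  (Filtration.stronglyAdapted_natural stronglyMeasurable_rad k).measurable

lemma integral_mul_rad_succ {k : ℕ} {g : Ω → ℝ} (hg : Measurable[ℱ k] g) :
    ∫ ω, g ω * rad (k + 1) ω ∂P = 0 := by
  have hindep : IndepFun g (rad (k + 1)) P :=
    (indep_of_indep_of_le_right (iIndepFun_rad.indep_comap_natural_of_lt
      stronglyMeasurable_rad k.lt_succ_self) hg.comap_le).symm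
  rw [← Pi.mul_def, hindep.integral_mul_eq_mul_integral
    (hg.mono (ℱ.le k) le_rfl).aestronglyMeasurable
    (stronglyMeasurable_rad _).aestronglyMeasurable, integral_rad, mul_zero]

lemma condExp_rad_succ (k : ℕ) : P[rad (k + 1) | ℱ k] =ᵐ[P] 0 := by
  have h := iIndepFun_rad.condExp_natural_ae_eq_of_lt stronglyMeasurable_rad k.lt_succ_self
  rw [integral_rad] at h
  exact h

def threshold (c : ℝ) : ℝ := c ^ 2 / (c ^ 2 - 1)

lemma threshold_pos {c : ℝ} (hc : 1 < c) : 0 < threshold c :=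
  div_pos (by positivity) (by nlinarith)

lemma inv_threshold {c : ℝ} (hc : 1 < c) : (threshold c)⁻¹ = 1 - (c ^ 2)⁻¹ := by
  have : c ^ 2 - 1 ≠ 0 := by nlinarith
  unfold threshold
  field_simp

def activeSet (c : ℝ) (k : ℕ) (f : Ω → ℝ) : Set Ω := {ω | f ω ^ 2 ≤ threshold c * (k + 1)}

-- On a null `activeSet` the junk value `0⁻¹ = 0` makes `scale` vanish, so `∫ step² ≤ 1` holds
-- unconditionally; this is what lets `E S_k² ≤ k` be proved before `P (activeSet) > 0` is known.
def scale (c : ℝ) (k : ℕ) (f : Ω → ℝ) : Ω → ℝ :=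
  (activeSet c k f).indicator fun _ => (√(P.real (activeSet c k f)))⁻¹

def step (c : ℝ) (k : ℕ) (f : Ω → ℝ) : Ω → ℝ := scale c k f * rad (k + 1)

section Step

variable {c : ℝ} {k : ℕ} {f : Ω → ℝ}

lemma measurableSet_activeSet {m : MeasurableSpace Ω} (hf : Measurable[m] f) :
    MeasurableSet[m] (activeSet c k f) :=
  measurableSet_le (hf.pow_const 2) measurable_const

lemma measurable_scale (hf : Measurable[ℱ k] f) : Measurable[ℱ k] (scale c k f) :=
  measurable_const.indicator (measurableSet_activeSet hf)

lemma measurable_step (hf : Measurable[ℱ k] f) : Measurable[ℱ (k + 1)] (step c k f) :=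
  ((measurable_scale hf).mono (ℱ.mono k.le_succ) le_rfl).mul (measurable_rad _)

lemma abs_scale_le (ω : Ω) : |scale c k f ω| ≤ (√(P.real (activeSet c k f)))⁻¹ := by
  unfold scale
  by_cases hω : ω ∈ activeSet c k f <;> simp [hω, abs_of_nonneg (sqrt_nonneg _)]

lemma abs_step_le (ω : Ω) : |step c k f ω| ≤ (√(P.real (activeSet c k f)))⁻¹ := by
  simpa [step, abs_mul, abs_rad] using abs_scale_le ω

lemma integral_mul_step {g : Ω → ℝ} (hf : Measurable[ℱ k] f) (hg : Measurable[ℱ k] g) :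
    ∫ ω, g ω * step c k f ω ∂P = 0 := by
  simpa only [step, Pi.mul_apply, mul_assoc] using
    integral_mul_rad_succ (hg.mul (measurable_scale (c := c) hf))

lemma memLp_top_step (hf : Measurable[ℱ k] f) : MemLp (step c k f) ⊤ P :=
  memLp_top_of_bound ((measurable_step hf).mono (ℱ.le _) le_rfl).aestronglyMeasurable _
    (ae_of_all _ abs_step_le)

lemma condExp_step (hf : Measurable[ℱ k] f) : P[step c k f | ℱ k] =ᵐ[P] 0 := by
  have hrad : Integrable (rad (k + 1)) P :=
    .of_bound (stronglyMeasurable_rad _).aestronglyMeasurable 1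
      (ae_of_all _ fun ω => (abs_rad _ ω).le)
  filter_upwards [condExp_mul_of_stronglyMeasurable_left (measurable_scale hf).stronglyMeasurable
    ((memLp_top_step hf).integrable le_top) hrad, condExp_rad_succ k] with ω h h'
  change P[scale c k f * rad (k + 1) | ℱ k] ω = 0
  rw [h, Pi.mul_apply, h', Pi.zero_apply, mul_zero]

lemma integral_step_sq (hf : Measurable[ℱ k] f) :
    ∫ ω, step c k f ω ^ 2 ∂P = (P.real (activeSet c k f))⁻¹ * P.real (activeSet c k f) := by
  have hsq : ∀ ω, step c k f ω ^ 2 =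
      (activeSet c k f).indicator (fun _ => (P.real (activeSet c k f))⁻¹) ω := by
    intro ω
    unfold step scale
    by_cases hω : ω ∈ activeSet c k f
    · simp [hω, mul_pow, rad_sq, inv_pow, sq_sqrt measureReal_nonneg]
    · simp [hω]
  simp_rw [hsq]
  rw [integral_indicator (measurableSet_activeSet (hf.mono (ℱ.le k) le_rfl)), setIntegral_const,
    smul_eq_mul, mul_comm]

lemma integral_add_step_sq (hf : Measurable[ℱ k] f) (hf' : MemLp f ⊤ P) :
    ∫ ω, (f ω + step c k f ω) ^ 2 ∂P = ∫ ω, f ω ^ 2 ∂P + ∫ ω, step c k f ω ^ 2 ∂P := by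
  have hS := memLp_top_step (c := c) hf
  have hff : Integrable (fun ω => f ω ^ 2) P := (hf'.mono_exponent le_top).integrable_sq
  have hSS : Integrable (fun ω => step c k f ω ^ 2) P := (hS.mono_exponent le_top).integrable_sq
  have hfS : Integrable (fun ω => 2 * f ω * step c k f ω) P :=
    ((hS.mul (hf'.const_mul 2)).integrable le_top).congr (ae_of_all _ fun _ => rfl)
  calc ∫ ω, (f ω + step c k f ω) ^ 2 ∂P
      = ∫ ω, (f ω ^ 2 + (2 * f ω * step c k f ω + step c k f ω ^ 2)) ∂P := by
        congr 1; ext ω; ring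
    _ = ∫ ω, f ω ^ 2 ∂P + (∫ ω, 2 * f ω * step c k f ω ∂P + ∫ ω, step c k f ω ^ 2 ∂P) :=
        (integral_add hff (hfS.add hSS)).trans (congrArg _ (integral_add hfS hSS))
    _ = ∫ ω, f ω ^ 2 ∂P + ∫ ω, step c k f ω ^ 2 ∂P := by
        rw [integral_mul_step hf (hf.const_mul 2), zero_add]

lemma inv_sq_le_measureReal_activeSet (hc : 1 < c) (hf : Measurable f)
    (hint : Integrable (fun ω => f ω ^ 2) P) (hvar : ∫ ω, f ω ^ 2 ∂P ≤ k) :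
    (c ^ 2)⁻¹ ≤ P.real (activeSet c k f) := by
  have hL := threshold_pos hc
  have hcompl : (activeSet c k f)ᶜ ⊆ {ω | threshold c * (k + 1) ≤ f ω ^ 2} :=
    fun ω (hω : ¬ f ω ^ 2 ≤ _) => (not_le.mp hω).le
  have hchebyshev : threshold c * (k + 1) * P.real (activeSet c k f)ᶜ ≤ k + 1 :=
    calc threshold c * (k + 1) * P.real (activeSet c k f)ᶜ
        ≤ threshold c * (k + 1) * P.real {ω | threshold c * (k + 1) ≤ f ω ^ 2} :=
          mul_le_mul_of_nonneg_left (measureReal_mono hcompl) (by positivity)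
      _ ≤ k + 1 := by
          linarith [mul_meas_ge_le_integral_of_nonneg (ae_of_all _ fun ω => sq_nonneg (f ω)) hint
            (threshold c * (k + 1))]
  have hout : P.real (activeSet c k f)ᶜ ≤ (threshold c)⁻¹ := by
    rw [← one_div, le_div_iff₀ hL]
    exact le_of_mul_le_mul_right (by linarith) k.cast_add_one_pos
  rw [measureReal_compl (measurableSet_activeSet hf), probReal_univ, inv_threshold hc] at hout
  linarith

lemma cosh_mul_scale_le (hscale : (√(P.real (activeSet c k f)))⁻¹ ≤ c) (t : ℝ) (ω : Ω) :
    cosh (t * scale c k f ω) ≤ exp (c ^ 2 * t ^ 2 / 2) := by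
  refine (cosh_le_exp_half_sq _).trans (exp_le_exp.2 ?_)
  have : |scale c k f ω| ^ 2 ≤ c ^ 2 :=
    pow_le_pow_left₀ (abs_nonneg _) ((abs_scale_le ω).trans hscale) 2
  rw [mul_pow, ← sq_abs (scale c k f ω)]
  nlinarith [sq_nonneg t]

lemma exp_mul_step (t : ℝ) (ω : Ω) : exp (t * step c k f ω) =
    cosh (t * scale c k f ω) + sinh (t * scale c k f ω) * rad (k + 1) ω := by
  rw [step, Pi.mul_apply, ← mul_assoc, exp_mul_eq_cosh_add_sinh_mul (rad_eq_one_or_neg_one _ _)]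

lemma integral_mul_exp_mul_step_le (hf : Measurable[ℱ k] f) {g : Ω → ℝ}
    (hg : Measurable[ℱ k] g) (hg0 : ∀ ω, 0 ≤ g ω) (hgi : Integrable g P)
    (hscale : (√(P.real (activeSet c k f)))⁻¹ ≤ c) (t : ℝ) :
    ∫ ω, g ω * exp (t * step c k f ω) ∂P ≤ exp (c ^ 2 * t ^ 2 / 2) * ∫ ω, g ω ∂P := by
  have hy : Measurable[ℱ k] fun ω => t * scale c k f ω := (measurable_scale hf).const_mul t
  have hy' := hy.mono (ℱ.le k) le_rfl
  have hcosh := cosh_mul_scale_le hscale t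
  have hint_cosh : Integrable (fun ω => g ω * cosh (t * scale c k f ω)) P :=
    hgi.mul_bdd (measurable_cosh.comp hy').aestronglyMeasurable (ae_of_all _ fun ω => by
      rw [Real.norm_eq_abs, abs_of_pos (cosh_pos _)]
      exact hcosh ω)
  have hint_sinh :
      Integrable (fun ω => g ω * (sinh (t * scale c k f ω) * rad (k + 1) ω)) P :=
    hgi.mul_bdd ((measurable_sinh.comp hy').mul
      (stronglyMeasurable_rad _).measurable).aestronglyMeasurable (ae_of_all _ fun ω => by
        rw [norm_mul, Real.norm_eq_abs, Real.norm_eq_abs, abs_rad, mul_one]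
        exact (abs_sinh_le_cosh _).trans (hcosh ω))
  have hodd : ∫ ω, g ω * (sinh (t * scale c k f ω) * rad (k + 1) ω) ∂P = 0 := by
    simpa only [Pi.mul_apply, Function.comp_apply, mul_assoc] using
      integral_mul_rad_succ (hg.mul (measurable_sinh.comp hy))
  calc ∫ ω, g ω * exp (t * step c k f ω) ∂P
      = ∫ ω, g ω * cosh (t * scale c k f ω) ∂P := by
        simp_rw [exp_mul_step, mul_add]
        rw [integral_add hint_cosh hint_sinh, hodd, add_zero]
    _ ≤ ∫ ω, g ω * exp (c ^ 2 * t ^ 2 / 2) ∂P :=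
        integral_mono hint_cosh (hgi.mul_const _)
          fun ω => mul_le_mul_of_nonneg_left (hcosh ω) (hg0 ω)
    _ = exp (c ^ 2 * t ^ 2 / 2) * ∫ ω, g ω ∂P := by rw [integral_mul_const, mul_comm]

end Step

def walk (c : ℝ) : ℕ → Ω → ℝ
  | 0 => 0
  | k + 1 => walk c k + step c k (walk c k)

def phi (c : ℝ) (n : ℕ) : Ω → ℝ := walk c n - walk c (n - 1)

section Walk

variable {c : ℝ}

lemma phi_zero : phi c 0 = 0 := sub_self _

lemma phi_succ (k : ℕ) : phi c (k + 1) = step c k (walk c k) := by simp [phi, walk]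

lemma walk_eq_sum (n : ℕ) : walk c n = ∑ k ∈ Icc 1 n, phi c k := by
  induction n with
  | zero => simp [walk]
  | succ n ih => rw [sum_Icc_succ_top (by omega), ← ih, phi_succ]; rfl

lemma measurable_walk : ∀ k, Measurable[ℱ k] (walk c k)
  | 0 => measurable_const
  | k + 1 => ((measurable_walk k).mono (ℱ.mono k.le_succ) le_rfl).add
      (measurable_step (measurable_walk k))

lemma measurable_phi : ∀ n, Measurable[ℱ n] (phi c n)
  | 0 => by rw [phi_zero]; exact measurable_const
  | k + 1 => by rw [phi_succ]; exact measurable_step (measurable_walk k)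

lemma memLp_top_walk : ∀ k, MemLp (walk c k) ⊤ P
  | 0 => memLp_top_const 0
  | k + 1 => (memLp_top_walk k).add (memLp_top_step (measurable_walk k))

lemma integral_walk_sq_le : ∀ k, ∫ ω, walk c k ω ^ 2 ∂P ≤ k
  | 0 => by simp [walk]
  | k + 1 => by
    rw [walk, Nat.cast_succ]
    simp only [Pi.add_apply]
    rw [integral_add_step_sq (measurable_walk k) (memLp_top_walk k)]
    gcongr
    · exact integral_walk_sq_le k
    · rw [integral_step_sq (measurable_walk k)]
      exact inv_mul_le_one

lemma inv_sq_le_measureReal_activeSet_walk (hc : 1 < c) (k : ℕ) :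
    (c ^ 2)⁻¹ ≤ P.real (activeSet c k (walk c k)) :=
  inv_sq_le_measureReal_activeSet hc ((measurable_walk k).mono (ℱ.le k) le_rfl)
    ((memLp_top_walk k).mono_exponent le_top).integrable_sq (integral_walk_sq_le k)

lemma measureReal_activeSet_walk_pos (hc : 1 < c) (k : ℕ) :
    0 < P.real (activeSet c k (walk c k)) :=
  (inv_pos.2 (by positivity)).trans_le (inv_sq_le_measureReal_activeSet_walk hc k)

lemma inv_sqrt_measureReal_activeSet_walk_le (hc : 1 < c) (k : ℕ) :
    (√(P.real (activeSet c k (walk c k))))⁻¹ ≤ c := by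
  have hc0 : 0 < c := by linarith
  rw [inv_le_comm₀ (sqrt_pos.2 (measureReal_activeSet_walk_pos hc k)) hc0,
    le_sqrt (by positivity) measureReal_nonneg, inv_pow]
  exact inv_sq_le_measureReal_activeSet_walk hc k

lemma abs_phi_le (hc : 1 < c) (n : ℕ) (ω : Ω) : |phi c n ω| ≤ c := by
  cases n with
  | zero => simp [phi_zero]; linarith
  | succ k =>
    rw [phi_succ]
    exact (abs_step_le ω).trans (inv_sqrt_measureReal_activeSet_walk_le hc k)

lemma abs_walk_le (hc : 1 < c) : ∀ n ω, |walk c n ω| ≤ √(threshold c * n) + c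
  | 0, ω => by simp [walk]; linarith
  | k + 1, ω => by
    have hL := (threshold_pos hc).le
    by_cases hω : ω ∈ activeSet c k (walk c k)
    · calc |walk c (k + 1) ω| ≤ |walk c k ω| + |step c k (walk c k) ω| := abs_add_le _ _
        _ ≤ √(threshold c * (k + 1 : ℕ)) + c := by
          gcongr
          · exact abs_le_sqrt (by push_cast; exact hω)
          · exact abs_step_le ω |>.trans (inv_sqrt_measureReal_activeSet_walk_le hc k)
    · have hstep : step c k (walk c k) ω = 0 := by simp [step, scale, hω]
      calc |walk c (k + 1) ω| = |walk c k ω| := by simp [walk, hstep]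
        _ ≤ √(threshold c * k) + c := abs_walk_le hc k ω
        _ ≤ √(threshold c * (k + 1 : ℕ)) + c := by gcongr; simp

lemma integral_phi_mul_phi_of_lt {i j : ℕ} (hij : i < j) :
    ∫ ω, phi c i ω * phi c j ω ∂P = 0 := by
  obtain ⟨k, rfl⟩ := Nat.exists_eq_add_of_lt hij
  rw [phi_succ]
  exact integral_mul_step (measurable_walk _)
    ((measurable_phi i).mono (ℱ.mono (by omega)) le_rfl)

lemma integral_phi_sq (hc : 1 < c) (k : ℕ) : ∫ ω, phi c (k + 1) ω ^ 2 ∂P = 1 := by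
  rw [phi_succ, integral_step_sq (measurable_walk k)]
  exact inv_mul_cancel₀ (measureReal_activeSet_walk_pos hc k).ne'

lemma integral_phi_mul_phi (hc : 1 < c) {n m : ℕ} (hn : 1 ≤ n) (hm : 1 ≤ m) :
    ∫ ω, phi c n ω * phi c m ω ∂P = if n = m then 1 else 0 := by
  rcases lt_trichotomy n m with h | rfl | h
  · rw [if_neg h.ne, integral_phi_mul_phi_of_lt h]
  · obtain ⟨k, rfl⟩ := Nat.exists_eq_add_of_le' hn
    simpa only [if_pos, sq] using integral_phi_sq hc k
  · simp_rw [if_neg h.ne', mul_comm (phi c n _)]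
    exact integral_phi_mul_phi_of_lt h

lemma condExp_phi {n : ℕ} (hn : 1 ≤ n) : P[phi c n | ℱ (n - 1)] =ᵐ[P] 0 := by
  obtain ⟨k, rfl⟩ := Nat.exists_eq_add_of_le' hn
  rw [phi_succ, Nat.add_sub_cancel]
  exact condExp_step (measurable_walk k)

lemma measurable_exp_sum {k : ℕ} {s : Finset ℕ} (hs : ∀ n ∈ s, n ≤ k) (x : ℕ → ℝ) :
    Measurable[ℱ k] fun ω => exp (∑ n ∈ s, x n * phi c n ω) :=
  (Finset.measurable_sum s fun n hn =>
    ((measurable_phi n).mono (ℱ.mono (hs n hn)) le_rfl).const_mul (x n)).exp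

lemma integrable_exp_sum (hc : 1 < c) (s : Finset ℕ) (x : ℕ → ℝ) :
    Integrable (fun ω => exp (∑ n ∈ s, x n * phi c n ω)) P := by
  have hmeas := measurable_exp_sum (c := c) (k := s.sup id) (fun n hn => le_sup (f := id) hn) x
  refine .of_bound (hmeas.mono (ℱ.le _) le_rfl).aestronglyMeasurable
    (exp (∑ n ∈ s, |x n| * c)) (ae_of_all _ fun ω => ?_)
  rw [Real.norm_eq_abs, abs_of_pos (exp_pos _), exp_le_exp]
  refine sum_le_sum fun n _ => (le_abs_self _).trans ?_
  rw [abs_mul]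
  exact mul_le_mul_of_nonneg_left (abs_phi_le hc n ω) (abs_nonneg _)

lemma integral_exp_sum_le (hc : 1 < c) {s : Finset ℕ} (hs : ∀ n ∈ s, 1 ≤ n) (x : ℕ → ℝ) :
    ∫ ω, exp (∑ n ∈ s, x n * phi c n ω) ∂P ≤ exp (c ^ 2 * (∑ n ∈ s, x n ^ 2) / 2) := by
  induction s using Finset.induction_on_max with
  | empty => simp
  | insert a s hlt ih =>
    obtain ⟨k, rfl⟩ := Nat.exists_eq_add_of_le' (hs a (mem_insert_self a s))
    have ha : k + 1 ∉ s := fun h => lt_irrefl _ (hlt _ h)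
    have hg := measurable_exp_sum (c := c) (k := k) (fun n hn => Nat.le_of_lt_succ (hlt n hn)) x
    calc ∫ ω, exp (∑ n ∈ insert (k + 1) s, x n * phi c n ω) ∂P
        = ∫ ω, exp (∑ n ∈ s, x n * phi c n ω) *
            exp (x (k + 1) * step c k (walk c k) ω) ∂P := by
          simp_rw [sum_insert ha, exp_add, phi_succ, mul_comm (exp (x (k + 1) * _))]
      _ ≤ exp (c ^ 2 * x (k + 1) ^ 2 / 2) * ∫ ω, exp (∑ n ∈ s, x n * phi c n ω) ∂P :=
          integral_mul_exp_mul_step_le (measurable_walk k) hg (fun _ => (exp_pos _).le)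
            (integrable_exp_sum hc s x) (inv_sqrt_measureReal_activeSet_walk_le hc k) _
      _ ≤ exp (c ^ 2 * x (k + 1) ^ 2 / 2) * exp (c ^ 2 * (∑ n ∈ s, x n ^ 2) / 2) := by
          gcongr
          exact ih fun n hn => hs n (mem_insert_of_mem hn)
      _ = exp (c ^ 2 * (∑ n ∈ insert (k + 1) s, x n ^ 2) / 2) := by
          rw [← exp_add, sum_insert ha]
          ring_nf

end Walk

end

end SubgaussianNotSidon

open SubgaussianNotSidon

/-- For every `ε > 0` there exist `δ_ε > 0`, a probability space `(T, m)`
and a real-valued orthonormal martingale difference sequence `(φ_n)_{n ≥ 1}` such that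
`‖φ_n‖_∞ ≤ 1 + ε`, the subgaussian bound
`∫ exp (∑ x_n φ_n) ≤ exp ((1+ε)² ∑ x_n² / 2)` holds for every finitely supported real
sequence `(x_n)` (supported in `n ≥ 1`), and any Sidon constant `C_n` of
`(φ_1, …, φ_n)` satisfies `C_n ≥ δ_ε √n`. -/
theorem subgaussian_not_sidon (ε : ℝ) (hε : 0 < ε) :
    ∃ δ : ℝ, 0 < δ ∧
    ∃ (T : Type) (_ : MeasurableSpace T) (m : Measure T) (φ : ℕ → T → ℝ)
      (𝒜 : ℕ → MeasurableSpace T),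
      IsProbabilityMeasure m ∧
      -- `𝒜` is a filtration on `T`
      Monotone 𝒜 ∧ (∀ n, 𝒜 n ≤ ‹MeasurableSpace T›) ∧
      -- `(φ_n)_{n ≥ 1}` is a martingale difference sequence relative to `𝒜`
      (∀ n, 1 ≤ n → Measurable[𝒜 n] (φ n)) ∧
      (∀ n, 1 ≤ n → m[φ n|𝒜 (n - 1)] =ᵐ[m] 0) ∧
      -- `(φ_n)_{n ≥ 1}` is orthonormal in `L²(T, m)`
      (∀ n k, 1 ≤ n → 1 ≤ k →
        ∫ t, φ n t * φ k t ∂m = if n = k then 1 else 0) ∧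
      -- (i) uniform boundedness: `‖φ_n‖_∞ ≤ 1 + ε`
      (∀ n, 1 ≤ n → eLpNorm (φ n) ⊤ m ≤ ENNReal.ofReal (1 + ε)) ∧
      -- (ii) the subgaussian estimate
      (∀ (s : Finset ℕ), (∀ k ∈ s, 1 ≤ k) → ∀ x : ℕ → ℝ,
        ∫ t, Real.exp (∑ n ∈ s, x n * φ n t) ∂m
          ≤ Real.exp ((1 + ε) ^ 2 * (∑ n ∈ s, x n ^ 2) / 2)) ∧
      -- (iii) any Sidon constant for `(φ_1, …, φ_n)` is at least `δ √n`
      (∀ n, 1 ≤ n → ∀ C : ℝ,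
        (∀ x : ℕ → ℝ,
          ENNReal.ofReal (∑ k ∈ Finset.Icc 1 n, |x k|)
            ≤ ENNReal.ofReal C *
              eLpNorm (fun t => ∑ k ∈ Finset.Icc 1 n, x k * φ k t) ⊤ m) →
        δ * Real.sqrt n ≤ C) := by
  have hc : 1 < 1 + ε := by linarith
  refine ⟨(√(threshold (1 + ε)) + (1 + ε))⁻¹, by positivity, Ω, inferInstance, P, phi (1 + ε),
    ℱ, inferInstance, fun _ _ h => ℱ.mono h, ℱ.le, fun n _ => measurable_phi n,
    fun _ hn => condExp_phi hn, fun _ _ hn hk => integral_phi_mul_phi hc hn hk,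
    fun n _ => eLpNorm_top_le_of_abs_le (abs_phi_le hc n),
    fun _ hs x => integral_exp_sum_le hc hs x, fun n hn C hC => ?_⟩
  refine inv_add_mul_sqrt_le (threshold_pos hc).le (by positivity) hn
    (natCast_le_mul_of_sidon hn ?_ hC)
  simp_rw [← Finset.sum_apply _ _ (phi (1 + ε)), ← walk_eq_sum]
  exact eLpNorm_top_le_of_abs_le (abs_walk_le hc n)
end

section
/- For every ε > 0 there exist constants β > 0 and c_ε > 0 (independent of n) such that for every n ≥ 1 there are a probability space (T, m), a measurable function φ : T → M_n with the n² functions { √n φ(·)_{ij} : 1 ≤ i, j ≤ n } orthonormal in L²(T, m) and β-subgaussian, and a matrix a ∈ M_n with tr|a| ≥ n (1+ε)^{-1} and ess sup_{t ∈ T} |tr(a φ(t))| ≤ c_ε. Consequently, the smallest constant C'_n such that tr|a| ≤ C'_n sup_t |tr(a φ(t))| for all a ∈ M_n satisfies C'_n ≥ n (1+ε)^{-1} c_ε^{-1}, so the trivial upper bound C'_n ≤ n is asymptotically optimal. -/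
/-!
Take for `T` the cube `{±1}^(n×n)` with independent uniform signs `ε_q`, and fix an orthonormal
basis `(u_q)` of `ℂ^(n×n)` whose vector `u_{q₀}` is the normalized identity matrix `n^(-1/2) I`.
Put `√n φ(t) = ∑_q ε_q(t) u_q`. A unitary change of basis preserves both orthonormality and
subgaussianity of a family, and the sign family itself is subgaussian: Hoeffding's bound
`cosh s ≤ exp (s² / 2)` controls its moment generating function, and `exp (x² / 4)` is a Gaussian
average of `exp (s x)`. Since `I` is orthogonal to every `u_q` with `q ≠ q₀`, the trace of `φ(t)`
is the single sign `ε_{q₀}(t)`, so `a = I` has `tr |a| = n` and `sup_t |tr (a φ(t))| = 1`.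
-/

open MeasureTheory ComplexConjugate ENNReal Matrix ComplexOrder

/-- The positive semidefinite square root of a positive semidefinite matrix (the definition
`Matrix.PosSemidef.sqrt` of the older Mathlib, removed since). -/
noncomputable def Matrix.PosSemidef.sqrt {n : Type*} [Fintype n] [DecidableEq n] {𝕜 : Type*}
    [RCLike 𝕜] {A : Matrix n n 𝕜} (hA : A.PosSemidef) : Matrix n n 𝕜 :=
  hA.1.eigenvectorUnitary.1 * diagonal ((↑) ∘ Real.sqrt ∘ hA.1.eigenvalues) *
    (star hA.1.eigenvectorUnitary : Matrix n n 𝕜)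

noncomputable section

def IsOrthonormalFamily {T ι : Type*} [MeasurableSpace T] [DecidableEq ι] (m : Measure T)
    (ψ : T → ι → ℂ) : Prop :=
  ∀ p q, ∫ t, ψ t p * conj (ψ t q) ∂m = if p = q then 1 else 0

def IsSubgaussianFamily {T ι : Type*} [MeasurableSpace T] [Fintype ι] (m : Measure T) (β : ℝ)
    (ψ : T → ι → ℂ) : Prop :=
  ∀ x : ι → ℂ, ∑ p, ‖x p‖ ^ 2 ≤ 1 →
    ∫ t, Real.exp (‖∑ p, x p * ψ t p‖ ^ 2 / β ^ 2) ∂m ≤ Real.exp 1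

lemma exp_neg_sq_add_mul (b s : ℝ) :
    Real.exp (-s ^ 2 + b * s) = Real.exp (b ^ 2 / 4) * Real.exp (-1 * (s - b / 2) ^ 2) := by
  rw [← Real.exp_add]; ring_nf

lemma integrable_exp_neg_sq_add_mul (b : ℝ) :
    Integrable fun s : ℝ => Real.exp (-s ^ 2 + b * s) := by
  simp_rw [exp_neg_sq_add_mul]
  exact ((integrable_exp_neg_mul_sq one_pos).comp_sub_right (b / 2)).const_mul _

lemma integral_exp_neg_sq_add_mul (b : ℝ) :
    ∫ s : ℝ, Real.exp (-s ^ 2 + b * s) = √Real.pi * Real.exp (b ^ 2 / 4) := by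
  simp_rw [exp_neg_sq_add_mul]
  rw [integral_const_mul, integral_sub_right_eq_self (fun s => Real.exp (-1 * s ^ 2)),
    integral_gaussian, div_one, mul_comm]

lemma integral_integral_swap_of_fintype {Ω α : Type*} [Fintype Ω] [MeasurableSpace Ω]
    [MeasurableSingletonClass Ω] [MeasurableSpace α] (μ : Measure Ω) [IsFiniteMeasure μ]
    (ν : Measure α) (F : Ω → α → ℝ) (hF : ∀ ω, Integrable (F ω) ν) :
    ∫ ω, (∫ s, F ω s ∂ν) ∂μ = ∫ s, ∫ ω, F ω s ∂μ ∂ν := by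
  calc ∫ ω, (∫ s, F ω s ∂ν) ∂μ = ∑ ω, μ.real {ω} • ∫ s, F ω s ∂ν := integral_fintype .of_finite
    _ = ∫ s, ∑ ω, μ.real {ω} • F ω s ∂ν := by
        rw [integral_finsetSum]
        · simp_rw [integral_smul]
        · exact fun ω _ => (hF ω).const_mul _
    _ = ∫ s, ∫ ω, F ω s ∂μ ∂ν := by simp_rw [integral_fintype (μ := μ) .of_finite]

/-- Completing the square, `exp (x² / 4) = π^(-1/2) ∫ exp (-s² + s x) ds`, which turns the bound
on the moment generating function into one on `exp (X² / 4)`. -/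
lemma integral_exp_sq_div_four_le_sqrt_two {Ω : Type*} [Fintype Ω] [MeasurableSpace Ω]
    [MeasurableSingletonClass Ω] (μ : Measure Ω) [IsFiniteMeasure μ] (X : Ω → ℝ)
    (hX : ∀ s, ∫ ω, Real.exp (s * X ω) ∂μ ≤ Real.exp (s ^ 2 / 2)) :
    ∫ ω, Real.exp (X ω ^ 2 / 4) ∂μ ≤ √2 := by
  have hπ : 0 < √Real.pi := Real.sqrt_pos.mpr Real.pi_pos
  have hsq : ∀ ω, Real.exp (X ω ^ 2 / 4) = (√Real.pi)⁻¹ * ∫ s, Real.exp (-s ^ 2 + X ω * s) := by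
    intro ω; rw [integral_exp_neg_sq_add_mul, inv_mul_cancel_left₀ hπ.ne']
  have hmgf : ∀ s, ∫ ω, Real.exp (-s ^ 2 + X ω * s) ∂μ ≤ Real.exp (-(1 / 2) * s ^ 2) := by
    intro s
    simp_rw [Real.exp_add, integral_const_mul, mul_comm (X _) s]
    calc Real.exp (-s ^ 2) * ∫ ω, Real.exp (s * X ω) ∂μ
        ≤ Real.exp (-s ^ 2) * Real.exp (s ^ 2 / 2) := by gcongr; exact hX s
      _ = Real.exp (-(1 / 2) * s ^ 2) := by rw [← Real.exp_add]; ring_nf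
  calc ∫ ω, Real.exp (X ω ^ 2 / 4) ∂μ
      = (√Real.pi)⁻¹ * ∫ s, ∫ ω, Real.exp (-s ^ 2 + X ω * s) ∂μ := by
        simp_rw [hsq, integral_const_mul]
        rw [integral_integral_swap_of_fintype μ volume _ fun ω => integrable_exp_neg_sq_add_mul _]
    _ ≤ (√Real.pi)⁻¹ * ∫ s, Real.exp (-(1 / 2) * s ^ 2) := by
        refine mul_le_mul_of_nonneg_left ?_ (by positivity)
        exact integral_mono_of_nonneg (.of_forall fun s => integral_nonneg fun ω => by positivity)
          (integrable_exp_neg_mul_sq (by norm_num)) (.of_forall hmgf)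
    _ = √2 := by
        rw [integral_gaussian, show Real.pi / (1 / 2) = Real.pi * 2 by ring,
          Real.sqrt_mul Real.pi_pos.le, inv_mul_cancel_left₀ hπ.ne']

def boolSign (b : Bool) : ℝ := if b then 1 else -1

@[simp] lemma boolSign_mul_self (b : Bool) : boolSign b * boolSign b = 1 := by
  cases b <;> simp [boolSign]

@[simp] lemma abs_boolSign (b : Bool) : |boolSign b| = 1 := by
  cases b <;> simp [boolSign]

abbrev signCube (ι : Type*) [Fintype ι] : Measure (ι → Bool) :=
  Measure.pi fun _ => (PMF.uniformOfFintype Bool).toMeasure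

section SignCube

variable {ι : Type*} [Fintype ι]

lemma integral_signCube_prod (f : ι → Bool → ℝ) :
    ∫ t, ∏ i, f i (t i) ∂signCube ι = ∏ i, (f i true + f i false) / 2 := by
  rw [integral_fintype_prod_eq_prod]
  refine Finset.prod_congr rfl fun i _ => ?_
  simp only [PMF.integral_eq_sum, Fintype.sum_bool, PMF.uniformOfFintype_apply,
    Fintype.card_bool, Nat.cast_ofNat, toReal_inv, toReal_ofNat, smul_eq_mul]
  ring

lemma integral_signCube_exp_sum_le (c : ι → ℝ) :
    ∫ t, Real.exp (∑ i, c i * boolSign (t i)) ∂signCube ι ≤ Real.exp ((∑ i, c i ^ 2) / 2) := by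
  simp_rw [Real.exp_sum, Finset.sum_div, Real.exp_sum]
  rw [integral_signCube_prod (fun i b => Real.exp (c i * boolSign b))]
  gcongr with i
  simpa [boolSign, Real.cosh_eq] using Real.cosh_le_exp_half_sq (c i)

lemma integral_signCube_sign_mul_sign [DecidableEq ι] (p q : ι) :
    ∫ t, boolSign (t p) * boolSign (t q) ∂signCube ι = if p = q then 1 else 0 := by
  rcases eq_or_ne p q with rfl | hpq
  · simp
  have := integral_signCube_prod
    (fun i b => (if i = p then boolSign b else 1) * (if i = q then boolSign b else 1))
  simp only [Finset.prod_mul_distrib, Finset.prod_ite_eq', Finset.mem_univ, if_true] at this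
  rw [this, if_neg hpq]
  exact Finset.prod_eq_zero (Finset.mem_univ p) (by simp [boolSign, hpq])

lemma integral_signCube_exp_sq_div_four_le (c : ι → ℝ) (hc : ∑ i, c i ^ 2 ≤ 1) :
    ∫ t, Real.exp ((∑ i, c i * boolSign (t i)) ^ 2 / 4) ∂signCube ι ≤ √2 := by
  classical
  refine integral_exp_sq_div_four_le_sqrt_two _ _ fun s => ?_
  calc ∫ t, Real.exp (s * ∑ i, c i * boolSign (t i)) ∂signCube ι
      = ∫ t, Real.exp (∑ i, (s * c i) * boolSign (t i)) ∂signCube ι := by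
        simp_rw [Finset.mul_sum, mul_assoc]
    _ ≤ Real.exp ((∑ i, (s * c i) ^ 2) / 2) := integral_signCube_exp_sum_le _
    _ ≤ Real.exp (s ^ 2 / 2) := by
        simp_rw [mul_pow, ← Finset.mul_sum]
        gcongr
        nlinarith [sq_nonneg s]

lemma isOrthonormalFamily_signCube [DecidableEq ι] :
    IsOrthonormalFamily (signCube ι) fun t i => (boolSign (t i) : ℂ) := by
  intro p q
  simp_rw [Complex.conj_ofReal, ← Complex.ofReal_mul, integral_complex_ofReal,
    integral_signCube_sign_mul_sign]
  split_ifs <;> simp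

lemma isSubgaussianFamily_signCube :
    IsSubgaussianFamily (signCube ι) √8 fun t i => (boolSign (t i) : ℂ) := by
  classical
  intro x hx
  set u : (ι → Bool) → ℝ := fun t => ∑ i, (x i).re * boolSign (t i)
  set v : (ι → Bool) → ℝ := fun t => ∑ i, (x i).im * boolSign (t i)
  have hsplit :
      ∀ t, ‖∑ i, x i * (boolSign (t i) : ℂ)‖ ^ 2 / √8 ^ 2 = (u t ^ 2 + v t ^ 2) / 8 := by
    intro t
    rw [Complex.sq_norm, Complex.normSq_apply, Real.sq_sqrt (by norm_num)]
    simp [u, v, Complex.re_sum, Complex.im_sum, sq]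
  have hre : ∑ i, (x i).re ^ 2 ≤ 1 := le_trans (Finset.sum_le_sum fun i _ => by
    rw [Complex.sq_norm, Complex.normSq_apply]; nlinarith [sq_nonneg (x i).im]) hx
  have him : ∑ i, (x i).im ^ 2 ≤ 1 := le_trans (Finset.sum_le_sum fun i _ => by
    rw [Complex.sq_norm, Complex.normSq_apply]; nlinarith [sq_nonneg (x i).re]) hx
  have amgm : ∀ a b : ℝ,
      Real.exp ((a ^ 2 + b ^ 2) / 8) ≤ (Real.exp (a ^ 2 / 4) + Real.exp (b ^ 2 / 4)) / 2 := by
    intro a b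
    have hsq : ∀ c : ℝ, Real.exp (c / 4) = Real.exp (c / 8) ^ 2 := fun c => by
      rw [sq, ← Real.exp_add]; ring_nf
    rw [hsq, hsq, add_div, Real.exp_add]
    nlinarith [sq_nonneg (Real.exp (a ^ 2 / 8) - Real.exp (b ^ 2 / 8))]
  calc ∫ t, Real.exp (‖∑ i, x i * (boolSign (t i) : ℂ)‖ ^ 2 / √8 ^ 2) ∂signCube ι
      = ∫ t, Real.exp ((u t ^ 2 + v t ^ 2) / 8) ∂signCube ι := by simp_rw [hsplit]
    _ ≤ ∫ t, (Real.exp (u t ^ 2 / 4) + Real.exp (v t ^ 2 / 4)) / 2 ∂signCube ι :=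
        integral_mono .of_finite .of_finite fun t => amgm (u t) (v t)
    _ = ((∫ t, Real.exp (u t ^ 2 / 4) ∂signCube ι) +
          ∫ t, Real.exp (v t ^ 2 / 4) ∂signCube ι) / 2 := by
        rw [integral_div, integral_add .of_finite .of_finite]
    _ ≤ (√2 + √2) / 2 := by
        gcongr
        exacts [integral_signCube_exp_sq_div_four_le _ hre,
          integral_signCube_exp_sq_div_four_le _ him]
    _ ≤ Real.exp 1 := by
        have h2 : √2 ≤ 2 := Real.sqrt_le_iff.mpr ⟨by norm_num, by norm_num⟩
        linarith [Real.add_one_le_exp (1 : ℝ)]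

end SignCube

section BasisCombination

variable {T ι κ : Type*} [Fintype ι] [Fintype κ]

def basisCombination (b : OrthonormalBasis ι ℂ (EuclideanSpace ℂ κ)) (ψ : T → ι → ℂ) (t : T)
    (p : κ) : ℂ :=
  ∑ q, ψ t q * b q p

variable (b : OrthonormalBasis ι ℂ (EuclideanSpace ℂ κ)) (ψ : T → ι → ℂ)

lemma sum_mul_basisCombination (x : κ → ℂ) (t : T) :
    ∑ p, x p * basisCombination b ψ t p =
      ∑ q, inner ℂ (WithLp.toLp 2 (star x)) (b q) * ψ t q := by
  simp_rw [basisCombination, Finset.mul_sum, EuclideanSpace.inner_eq_star_dotProduct, dotProduct]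
  rw [Finset.sum_comm]
  refine Finset.sum_congr rfl fun q _ => ?_
  rw [Finset.sum_mul]
  refine Finset.sum_congr rfl fun p _ => ?_
  simp only [Pi.star_apply, star_star]
  ring

lemma sum_star_mul_basisCombination (q₀ : ι) (t : T) :
    ∑ p, star (b q₀ p) * basisCombination b ψ t p = ψ t q₀ := by
  classical
  have hb : WithLp.toLp 2 (star fun p => star (b q₀ p)) = b q₀ := by ext; simp
  rw [sum_mul_basisCombination, hb]
  simp [b.inner_eq_ite]

variable {ψ} [MeasurableSpace T] {m : Measure T}

lemma IsSubgaussianFamily.basisCombination {β : ℝ} (hψ : IsSubgaussianFamily m β ψ) :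
    IsSubgaussianFamily m β (basisCombination b ψ) := by
  intro x hx
  simp_rw [sum_mul_basisCombination]
  refine hψ _ ?_
  rw [b.sum_sq_norm_inner_left, EuclideanSpace.norm_sq_eq]
  simpa using hx

lemma IsOrthonormalFamily.basisCombination [DecidableEq ι] [DecidableEq κ]
    (hψ : IsOrthonormalFamily m ψ)
    (hint : ∀ q q', Integrable (fun t => ψ t q * conj (ψ t q')) m) :
    IsOrthonormalFamily m (_root_.basisCombination b ψ) := by
  intro p p'
  have hexpand : ∀ t, _root_.basisCombination b ψ t p * conj (_root_.basisCombination b ψ t p')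
      = ∑ q, ∑ q', (b q p * conj (b q' p')) * (ψ t q * conj (ψ t q')) := by
    intro t
    simp_rw [_root_.basisCombination, map_sum, Finset.sum_mul_sum, map_mul]
    exact Finset.sum_congr rfl fun q _ => Finset.sum_congr rfl fun q' _ => by ring
  have hrows : ∑ q, b q p * conj (b q p') = if p = p' then 1 else 0 := by
    have := b.sum_inner_mul_inner (EuclideanSpace.single p 1) (EuclideanSpace.single p' 1)
    simpa [EuclideanSpace.inner_single_left, EuclideanSpace.inner_single_right, Pi.single_apply,
      eq_comm] using this
  simp_rw [hexpand]
  rw [integral_finsetSum _ fun q _ => integrable_finsetSum _ fun q' _ => (hint q q').const_mul _]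
  have hcol : ∀ q, ∫ t, ∑ q', (b q p * conj (b q' p')) * (ψ t q * conj (ψ t q')) ∂m
      = b q p * conj (b q p') := by
    intro q
    rw [integral_finsetSum _ fun q' _ => (hint q q').const_mul _]
    simp [integral_const_mul, hψ q]
  exact (Finset.sum_congr rfl fun q _ => hcol q).trans hrows

end BasisCombination

lemma exists_orthonormalBasis_apply_eq {𝕜 E ι : Type*} [RCLike 𝕜] [NormedAddCommGroup E]
    [InnerProductSpace 𝕜 E] [FiniteDimensional 𝕜 E] [Fintype ι]
    (hcard : Module.finrank 𝕜 E = Fintype.card ι) {u : E} (hu : ‖u‖ = 1) (q₀ : ι) :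
    ∃ b : OrthonormalBasis ι 𝕜 E, b q₀ = u := by
  obtain ⟨b, hb⟩ := Orthonormal.exists_orthonormalBasis_extension_of_card_eq hcard
    (v := fun _ => u) (s := {q₀}) (by simp [hu])
  exact ⟨b, hb q₀ rfl⟩

lemma Matrix.PosSemidef.sqrt_eq_cfc {n 𝕜 : Type*} [Fintype n] [DecidableEq n] [RCLike 𝕜]
    {A : Matrix n n 𝕜} (hA : A.PosSemidef) : hA.sqrt = cfc Real.sqrt A := by
  rw [hA.1.cfc_eq, IsHermitian.cfc, Unitary.conjStarAlgAut_apply, PosSemidef.sqrt]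

lemma Matrix.sqrt_conjTranspose_mul_self_one {n 𝕜 : Type*} [Fintype n] [DecidableEq n]
    [RCLike 𝕜] :
    (posSemidef_conjTranspose_mul_self (1 : Matrix n n 𝕜)).sqrt = 1 := by
  rw [PosSemidef.sqrt_eq_cfc, conjTranspose_one, mul_one,
    ← map_one (algebraMap ℝ (Matrix n n 𝕜)), cfc_algebraMap, Real.sqrt_one]

lemma div_le_of_ofReal_le_ofReal_mul {A C c : ℝ} (hA : 0 < A) (hc : 0 < c)
    (h : ENNReal.ofReal A ≤ ENNReal.ofReal C * ENNReal.ofReal c) : A / c ≤ C := by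
  rcases le_or_gt C 0 with hC | hC
  · simp [ENNReal.ofReal_of_nonpos hC] at h
    linarith
  · rw [← ENNReal.ofReal_mul hC.le, ENNReal.ofReal_le_ofReal_iff (by positivity)] at h
    rwa [div_le_iff₀ hc]

def identityUnitVector (n : ℕ) : EuclideanSpace ℂ (Fin n × Fin n) :=
  WithLp.toLp 2 fun p => if p.1 = p.2 then ((√n : ℝ) : ℂ)⁻¹ else 0

lemma norm_identityUnitVector {n : ℕ} (hn : n ≠ 0) : ‖identityUnitVector n‖ = 1 := by
  rw [EuclideanSpace.norm_eq, Real.sqrt_eq_one]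
  simp [identityUnitVector, Fintype.sum_prod_type, apply_ite, Finset.sum_ite_eq, hn]

section BasisMatrix

variable {T : Type*} {n : ℕ}
  (b : OrthonormalBasis (Fin n × Fin n) ℂ (EuclideanSpace ℂ (Fin n × Fin n)))
  (ψ : T → Fin n × Fin n → ℂ)

def basisMatrix (t : T) : Matrix (Fin n) (Fin n) ℂ :=
  Matrix.of fun i j => ((√n : ℝ) : ℂ)⁻¹ * basisCombination b ψ t (i, j)

lemma sqrt_mul_basisMatrix (hn : n ≠ 0) (t : T) (i j : Fin n) :
    ((√n : ℝ) : ℂ) * basisMatrix b ψ t i j = basisCombination b ψ t (i, j) := by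
  have : ((√n : ℝ) : ℂ) ≠ 0 := by simp [hn]
  simp [basisMatrix, mul_inv_cancel_left₀ this]

lemma trace_basisMatrix {q₀ : Fin n × Fin n} (hb : b q₀ = identityUnitVector n) (t : T) :
    trace (basisMatrix b ψ t) = ψ t q₀ := by
  rw [← sum_star_mul_basisCombination b ψ q₀ t, hb]
  simp [identityUnitVector, basisMatrix, trace, Fintype.sum_prod_type, apply_ite,
    Finset.sum_ite_eq]

end BasisMatrix

/-- For every `ε > 0` there are constants `β, c_ε > 0` (independent of `n`)
such that for every `n ≥ 1` there exist a probability space `(T, m)`, a matrix-valued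
`φ : T → M_n` whose `n²` rescaled entries `{√n φ(·)_{ij}}` are orthonormal in `L²(T, m)` and
`β`-subgaussian, and a matrix `a ∈ M_n` with `tr|a| ≥ n (1+ε)⁻¹` while
`ess sup_t |tr (a φ(t))| ≤ c_ε`. Consequently any constant `C'` with
`tr|b| ≤ C' sup_t |tr (b φ(t))|` for all `b ∈ M_n` satisfies `C' ≥ n (1+ε)⁻¹ c_ε⁻¹`, so the
trivial bound `C'_n ≤ n` is asymptotically optimal. -/
theorem matrix_sidon_lower_bound (ε : ℝ) (hε : 0 < ε) :
    ∃ β c : ℝ, 0 < β ∧ 0 < c ∧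
    ∀ n : ℕ, 1 ≤ n →
    ∃ (T : Type) (_ : MeasurableSpace T) (m : Measure T)
      (φ : T → Matrix (Fin n) (Fin n) ℂ) (a : Matrix (Fin n) (Fin n) ℂ),
      IsProbabilityMeasure m ∧
      (∀ i j, Measurable fun t => φ t i j) ∧
      -- the rescaled entries are orthonormal in `L²(T, m)`
      (∀ i j i' j' : Fin n,
        ∫ t, ((Real.sqrt n : ℂ) * φ t i j) * conj ((Real.sqrt n : ℂ) * φ t i' j') ∂m
          = if i = i' ∧ j = j' then 1 else 0) ∧
      -- the rescaled entries are `β`-subgaussian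
      (∀ x : Fin n × Fin n → ℂ, (∑ p, ‖x p‖ ^ 2) ≤ 1 →
        ∫ t, Real.exp
            (‖∑ p : Fin n × Fin n, x p * ((Real.sqrt n : ℂ) * φ t p.1 p.2)‖ ^ 2 / β ^ 2) ∂m
          ≤ Real.exp 1) ∧
      -- `tr|a| ≥ n (1+ε)⁻¹`
      (n : ℝ) * (1 + ε)⁻¹ ≤ (Matrix.posSemidef_conjTranspose_mul_self a).sqrt.trace.re ∧
      -- `ess sup_t |tr (a φ(t))| ≤ c`
      eLpNorm (fun t => Matrix.trace (a * φ t)) ⊤ m ≤ ENNReal.ofReal c ∧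
      -- consequently: any "matrix Sidon" constant `C'` for `φ` is at least `n (1+ε)⁻¹ c⁻¹`
      (∀ C' : ℝ,
        (∀ b : Matrix (Fin n) (Fin n) ℂ,
          ENNReal.ofReal ((Matrix.posSemidef_conjTranspose_mul_self b).sqrt.trace.re)
            ≤ ENNReal.ofReal C' * eLpNorm (fun t => Matrix.trace (b * φ t)) ⊤ m) →
        (n : ℝ) * (1 + ε)⁻¹ * c⁻¹ ≤ C') := by
  refine ⟨√8, 1, by positivity, one_pos, fun n hn => ?_⟩
  have hn0 : n ≠ 0 := by omega
  let q₀ : Fin n × Fin n := (⟨0, hn⟩, ⟨0, hn⟩)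
  obtain ⟨b, hb⟩ :=
    exists_orthonormalBasis_apply_eq (𝕜 := ℂ) (by simp) (norm_identityUnitVector hn0) q₀
  let ψ : (Fin n × Fin n → Bool) → Fin n × Fin n → ℂ := fun t q => boolSign (t q)
  have hsup :
      eLpNorm (fun t => trace (1 * basisMatrix b ψ t)) ⊤ (signCube _) ≤ ENNReal.ofReal 1 := by
    rw [eLpNorm_exponent_top]
    refine eLpNormEssSup_le_of_ae_bound (.of_forall fun t => ?_)
    rw [one_mul, trace_basisMatrix b ψ hb]
    simp [ψ]
  have htrace :
      (posSemidef_conjTranspose_mul_self (1 : Matrix (Fin n) (Fin n) ℂ)).sqrt.trace.re = n := by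
    simp [sqrt_conjTranspose_mul_self_one]
  have hshrink : (n : ℝ) * (1 + ε)⁻¹ ≤ n :=
    mul_le_of_le_one_right n.cast_nonneg (inv_le_one_of_one_le₀ (by linarith))
  refine ⟨_, _, signCube _, basisMatrix b ψ, 1, inferInstance, fun _ _ => .of_discrete, ?_, ?_,
    htrace ▸ hshrink, hsup, fun C' hC' => ?_⟩
  · intro i j i' j'
    simpa [sqrt_mul_basisMatrix b ψ hn0] using
      isOrthonormalFamily_signCube.basisCombination b (fun _ _ => .of_finite) (i, j) (i', j')
  · intro x hx
    simpa [sqrt_mul_basisMatrix b ψ hn0] using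
      isSubgaussianFamily_signCube.basisCombination b x hx
  · have hC := div_le_of_ofReal_le_ofReal_mul (A := n) (by positivity) one_pos
      (htrace ▸ (hC' 1).trans (by gcongr))
    rw [inv_one, mul_one]
    exact hshrink.trans (div_one (n : ℝ) ▸ hC)
end
end

section
/- Let (Ω', 𝒜', P') be a probability space, let ℬ ⊂ 𝒜' be a σ-subalgebra, and let φ ∈ L¹(Ω', 𝒜', P') take values in [−1, 1] with E[φ | ℬ] = 0. Then for any Banach space B, any x₁ ∈ B, and any ℬ-measurable Bochner-integrable x₀ : Ω' → B, ∫ ‖x₀(ω) + φ(ω) x₁‖ dP'(ω) ≤ ∫ (‖x₀(ω) + x₁‖ + ‖x₀(ω) − x₁‖)/2 dP'(ω). -/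
/-!
For `t ∈ [-1, 1]` write `a + t • x = ((1 + t) / 2) • (a + x) + ((1 - t) / 2) • (a - x)`; the triangle
inequality bounds `‖a + t • x‖` by the average `(‖a + x‖ + ‖a - x‖) / 2` plus `t` times the slope
`(‖a + x‖ - ‖a - x‖) / 2`. With `a = x₀ ω` and `t = φ ω` the slope is a bounded `ℬ`-measurable
function, so integrating it against `φ` gives zero because `E[φ | ℬ] = 0`.
-/

open MeasureTheory

section Chord

variable {E : Type*} [NormedAddCommGroup E] [NormedSpace ℝ E]

theorem norm_add_smul_le_of_mem_Icc (a x : E) {t : ℝ} (ht : t ∈ Set.Icc (-1 : ℝ) 1) :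
    ‖a + t • x‖ ≤ (‖a + x‖ + ‖a - x‖) / 2 + t * ((‖a + x‖ - ‖a - x‖) / 2) := by
  obtain ⟨ht₁, ht₂⟩ := ht
  have hdecomp : a + t • x = ((1 + t) / 2) • (a + x) + ((1 - t) / 2) • (a - x) := by
    match_scalars <;> ring
  calc ‖a + t • x‖ ≤ ‖((1 + t) / 2) • (a + x)‖ + ‖((1 - t) / 2) • (a - x)‖ :=
        hdecomp ▸ norm_add_le _ _
    _ = (1 + t) / 2 * ‖a + x‖ + (1 - t) / 2 * ‖a - x‖ := by
        rw [norm_smul, norm_smul, Real.norm_of_nonneg (by linarith),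
          Real.norm_of_nonneg (by linarith)]
    _ = (‖a + x‖ + ‖a - x‖) / 2 + t * ((‖a + x‖ - ‖a - x‖) / 2) := by ring

theorem norm_half_norm_add_sub_norm_sub_le (a x : E) :
    ‖(‖a + x‖ - ‖a - x‖) / 2‖ ≤ ‖x‖ := by
  have h := abs_norm_sub_norm_le (a + x) (a - x)
  rw [add_sub_sub_cancel, ← two_smul ℝ x, norm_smul, Real.norm_two] at h
  rw [Real.norm_eq_abs, abs_div, abs_two]
  linarith

end Chord

theorem integral_mul_eq_zero_of_condExp_eq_zero {Ω : Type*} {m m₀ : MeasurableSpace Ω}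
    {μ : Measure Ω} (hm : m ≤ m₀) [SigmaFinite (μ.trim hm)] {f g : Ω → ℝ}
    (hg : StronglyMeasurable[m] g) (hgf : Integrable (g * f) μ) (hf : Integrable f μ)
    (hcond : μ[f | m] =ᵐ[μ] 0) :
    ∫ ω, g ω * f ω ∂μ = 0 := by
  have hcond_mul : μ[g * f | m] =ᵐ[μ] 0 := by
    filter_upwards [condExp_mul_of_stronglyMeasurable_left hg hgf hf, hcond] with ω hω hω'
    simp [hω, hω']
  calc ∫ ω, g ω * f ω ∂μ = ∫ ω, (μ[g * f | m]) ω ∂μ := (integral_condExp hm).symm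
    _ = 0 := by rw [integral_congr_ae hcond_mul, Pi.zero_def, integral_zero]

/-- (Conditional version of Statement 9.) If `φ` is an integrable random
variable on a probability space `(Ω', 𝒜', P')` with values in `[-1, 1]` and
`E[φ | ℬ] = 0` for a σ-subalgebra `ℬ ⊆ 𝒜'`, then for any Banach space `B`, any `x₁ ∈ B`
and any `ℬ`-measurable Bochner-integrable `x₀ : Ω' → B`,
`∫ ‖x₀(ω) + φ(ω) x₁‖ dP' ≤ ∫ (‖x₀(ω) + x₁‖ + ‖x₀(ω) - x₁‖)/2 dP'`. -/
theorem mean_norm_le_rademacher_cond {Ω' : Type} [mΩ' : MeasurableSpace Ω']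
    (P' : Measure Ω') [IsProbabilityMeasure P']
    (ℬ : MeasurableSpace Ω') (hℬ : ℬ ≤ mΩ')
    (φ : Ω' → ℝ) (hint : Integrable φ P')
    (hrange : ∀ᵐ ω ∂P', φ ω ∈ Set.Icc (-1 : ℝ) 1)
    (hcond : P'[φ|ℬ] =ᵐ[P'] 0)
    (B : Type) [NormedAddCommGroup B] [NormedSpace ℝ B]
    (x₀ : Ω' → B) (hx₀int : Integrable x₀ P') (hx₀meas : StronglyMeasurable[ℬ] x₀)
    (x₁ : B) :
    ∫ ω, ‖x₀ ω + φ ω • x₁‖ ∂P'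
      ≤ ∫ ω, (‖x₀ ω + x₁‖ + ‖x₀ ω - x₁‖) / 2 ∂P' := by
  set slope : Ω' → ℝ := fun ω => (‖x₀ ω + x₁‖ - ‖x₀ ω - x₁‖) / 2
  have hslope_meas : StronglyMeasurable[ℬ] slope :=
    ((hx₀meas.add stronglyMeasurable_const).norm.sub
      (hx₀meas.sub stronglyMeasurable_const).norm).div stronglyMeasurable_const
  have hslope_int : Integrable (fun ω => slope ω * φ ω) P' :=
    hint.bdd_mul (hslope_meas.mono hℬ).aestronglyMeasurable
      (.of_forall fun ω => norm_half_norm_add_sub_norm_sub_le (x₀ ω) x₁)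
  have hmean_int : Integrable (fun ω => (‖x₀ ω + x₁‖ + ‖x₀ ω - x₁‖) / 2) P' :=
    ((hx₀int.add (integrable_const x₁)).norm.add
      (hx₀int.sub (integrable_const x₁)).norm).div_const 2
  calc ∫ ω, ‖x₀ ω + φ ω • x₁‖ ∂P'
      ≤ ∫ ω, ((‖x₀ ω + x₁‖ + ‖x₀ ω - x₁‖) / 2 + slope ω * φ ω) ∂P' := by
        refine integral_mono_ae (hx₀int.add (hint.smul_const x₁)).norm
          (hmean_int.add hslope_int) ?_
        filter_upwards [hrange] with ω hω
        simpa only [mul_comm (slope ω)] using norm_add_smul_le_of_mem_Icc (x₀ ω) x₁ hω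
    _ = ∫ ω, (‖x₀ ω + x₁‖ + ‖x₀ ω - x₁‖) / 2 ∂P' := by
        rw [integral_add hmean_int hslope_int,
          integral_mul_eq_zero_of_condExp_eq_zero hℬ hslope_meas hslope_int hint hcond, add_zero]
end

section
/- Let (d_n)_{n≥0} be a real-valued martingale difference sequence on (Ω', 𝒜', P') with respect to an increasing filtration (𝒜_n), with 𝒜_0 trivial, such that |d_n| ≤ 1 almost surely for every n. Let (ε_n)_{n≥1} be an i.i.d. sequence of Rademacher variables on (Ω, 𝒜, P). Then there exists a bounded linear operator u : L¹(Ω, 𝒜, P) → L¹(Ω', 𝒜', P') with ‖u‖ = 1 such that u(1) = 1 and u(ε_n) = d_n for all n ≥ 1. In particular, every [−1,1]-valued martingale difference sequence is 1-dominated by the Rademacher sequence. -/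
/-!
Write `w_S = ∏_{i ∈ S} ε_i` for the Walsh functions and `D_S = ∏_{i ∈ S} d_i`. The martingale
difference property gives `∫ D_S = 0` for `S ≠ ∅`, so the Riesz product
`K_N(ω, ω') = ∏_{i ≤ N} (1 + ε_i(ω) d_i(ω')) = ∑_{S ⊆ [0, N]} w_S(ω) D_S(ω')` is a nonnegative
kernel with `∫ K_N(ω, ·) dP' = 1`. Hence `u_N f = ∫ f(ω) K_N(ω, ·) dP(ω) = ∑_S ⟨f, w_S⟩ D_S` is an
`L¹`-contraction, and orthonormality of the Walsh system gives `u_N w_S = D_S`. As `u_N f` only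
depends on `𝔼[f | ε_0, …, ε_N]`, which converges in `L¹` by Lévy's upward theorem, `u_N f` is
Cauchy; the limit `u` is a contraction with `u w_S = D_S`, and `S = ∅`, `S = {n}` give `u 1 = 1`,
`u ε_n = d_n`.
-/

open MeasureTheory ProbabilityTheory

open Filter Finset
open scoped ENNReal symmDiff

namespace Rademacher

section Algebra

variable {Ω Ω' : Type*} {e : ℕ → Ω → ℝ} {d : ℕ → Ω' → ℝ}

def walsh (e : ℕ → Ω → ℝ) (S : Finset ℕ) (ω : Ω) : ℝ := ∏ i ∈ S, e i ω

@[simp] lemma walsh_empty : walsh e ∅ = 1 := by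
  ext; simp [walsh]

@[simp] lemma walsh_singleton (n : ℕ) : walsh e {n} = e n := by
  ext; simp [walsh]

lemma walsh_mul_walsh {ω : Ω} (he : ∀ i, e i ω ^ 2 = 1) (S T : Finset ℕ) :
    walsh e S ω * walsh e T ω = walsh e (S ∆ T) ω := by
  have hinter : (∏ i ∈ S ∩ T, e i ω) * ∏ i ∈ S ∩ T, e i ω = 1 := by
    rw [← Finset.prod_mul_distrib]
    exact Finset.prod_eq_one fun i _ => by rw [← sq, he i]
  calc walsh e S ω * walsh e T ω
      = ((∏ i ∈ S \ T, e i ω) * ∏ i ∈ T \ S, e i ω) *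
          ((∏ i ∈ S ∩ T, e i ω) * ∏ i ∈ S ∩ T, e i ω) := by
        rw [walsh, walsh, ← Finset.prod_inter_mul_prod_sdiff S T,
          ← Finset.prod_inter_mul_prod_sdiff T S, Finset.inter_comm T S]
        ring
    _ = walsh e (S ∆ T) ω := by
        rw [hinter, mul_one, walsh, Finset.symmDiff_def, Finset.prod_union disjoint_sdiff_sdiff]

lemma measurable_walsh {m : MeasurableSpace Ω} {S : Finset ℕ} (he : ∀ i ∈ S, Measurable[m] (e i)) :
    Measurable[m] (walsh e S) :=
  Finset.measurable_fun_prod S he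

def rieszProduct (e : ℕ → Ω → ℝ) (d : ℕ → Ω' → ℝ) (s : Finset ℕ) (ω : Ω) (ω' : Ω') : ℝ :=
  ∏ i ∈ s, (1 + e i ω * d i ω')

lemma rieszProduct_eq_sum (s : Finset ℕ) (ω : Ω) (ω' : Ω') :
    rieszProduct e d s ω ω' = ∑ S ∈ s.powerset, walsh e S ω * walsh d S ω' := by
  simp only [rieszProduct, Finset.prod_one_add, walsh, Finset.prod_mul_distrib]

lemma rieszProduct_nonneg {s : Finset ℕ} {ω : Ω} {ω' : Ω'} (he : ∀ i, |e i ω| ≤ 1)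
    (hd : ∀ i, |d i ω'| ≤ 1) : 0 ≤ rieszProduct e d s ω ω' := by
  refine Finset.prod_nonneg fun i _ => ?_
  have : |e i ω * d i ω'| ≤ 1 := by
    rw [abs_mul]; exact mul_le_one₀ (he i) (abs_nonneg _) (hd i)
  linarith [neg_abs_le (e i ω * d i ω')]

end Algebra

section Measurable

variable {Ω : Type*} [mΩ : MeasurableSpace Ω] {μ : Measure Ω} {e : ℕ → Ω → ℝ}

lemma ae_abs_walsh_le_one (he : ∀ i, ∀ᵐ ω ∂μ, |e i ω| ≤ 1) (S : Finset ℕ) :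
    ∀ᵐ ω ∂μ, |walsh e S ω| ≤ 1 := by
  filter_upwards [ae_all_iff.2 he] with ω hω
  rw [walsh, Finset.abs_prod]
  exact Finset.prod_le_one (fun i _ => abs_nonneg _) fun i _ => hω i

lemma memLp_walsh [IsFiniteMeasure μ] (hm : ∀ i, Measurable (e i))
    (he : ∀ i, ∀ᵐ ω ∂μ, |e i ω| ≤ 1) (S : Finset ℕ) (p : ℝ≥0∞) : MemLp (walsh e S) p μ :=
  MemLp.of_bound (measurable_walsh fun i _ => hm i).aestronglyMeasurable 1
    (ae_abs_walsh_le_one he S)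

lemma integral_mul_toLp {f g : Ω → ℝ} (hg : MemLp g 1 μ) :
    ∫ ω, f ω * hg.toLp g ω ∂μ = ∫ ω, f ω * g ω ∂μ :=
  integral_congr_ae (hg.coeFn_toLp.mono fun ω h => by simp only [h])

lemma norm_toLp_one [IsProbabilityMeasure μ] :
    ‖(memLp_const (1 : ℝ)).toLp (fun _ => (1 : ℝ)) (μ := μ) (p := 1)‖ = 1 := by
  rw [Lp.norm_toLp, eLpNorm_const _ one_ne_zero (IsProbabilityMeasure.ne_zero μ)]
  simp

lemma integral_mul_condExp {m : MeasurableSpace Ω} [IsFiniteMeasure μ] (hm : m ≤ mΩ)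
    {g f : Ω → ℝ} (hg : StronglyMeasurable[m] g) {c : ℝ} (hgc : ∀ᵐ ω ∂μ, ‖g ω‖ ≤ c)
    (hf : Integrable f μ) : ∫ ω, g ω * μ[f|m] ω ∂μ = ∫ ω, g ω * f ω ∂μ :=
  calc ∫ ω, g ω * μ[f|m] ω ∂μ = ∫ ω, μ[g * f|m] ω ∂μ :=
        integral_congr_ae (condExp_stronglyMeasurable_mul_of_bound hm hg hf c hgc).symm
    _ = ∫ ω, g ω * f ω ∂μ := integral_condExp hm

lemma integral_walsh_eq_zero_of_condExp_eq_zero [IsFiniteMeasure μ] {𝒜 : ℕ → MeasurableSpace Ω}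
    (hmono : Monotone 𝒜) (hle : ∀ n, 𝒜 n ≤ mΩ) {d : ℕ → Ω → ℝ}
    (hadapt : ∀ n, Measurable[𝒜 n] (d n)) (hmds : ∀ n, μ[d (n + 1)|𝒜 n] =ᵐ[μ] 0)
    (hbdd : ∀ n, ∀ᵐ ω ∂μ, |d n ω| ≤ 1) (hint : ∀ n, Integrable (d n) μ)
    {S : Finset ℕ} (hS : S.Nonempty) : ∫ ω, walsh (fun i => d (i + 1)) S ω ∂μ = 0 := by
  set m := S.max' hS
  set h := walsh (fun i => d (i + 1)) (S.erase m)
  have hh : StronglyMeasurable[𝒜 m] h := by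
    refine (measurable_walsh fun i hi => (hadapt (i + 1)).mono (hmono ?_) le_rfl).stronglyMeasurable
    exact Finset.lt_max'_of_mem_erase_max' S hS hi
  have hsplit : walsh (fun i => d (i + 1)) S = fun ω => h ω * d (m + 1) ω :=
    funext fun ω => (Finset.prod_erase_mul S _ (S.max'_mem hS)).symm
  rw [hsplit, ← integral_mul_condExp (hle m) hh (c := 1)
    (ae_abs_walsh_le_one (fun i => hbdd (i + 1)) _) (hint (m + 1))]
  exact integral_eq_zero_of_ae ((hmds m).mono fun ω hω => by simp [hω])

lemma ae_eq_one_or_eq_neg_one [IsProbabilityMeasure μ] {g : Ω → ℝ} (hg : Measurable g)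
    (h1 : μ {ω | g ω = 1} = 1 / 2) (h2 : μ {ω | g ω = -1} = 1 / 2) :
    ∀ᵐ ω ∂μ, g ω = 1 ∨ g ω = -1 := by
  have hdisj : Disjoint {ω | g ω = 1} {ω | g ω = -1} :=
    Set.disjoint_left.2 fun ω (h : g ω = 1) (h' : g ω = -1) => by linarith
  have hunion : μ ({ω | g ω = 1} ∪ {ω | g ω = -1}) = 1 := by
    rw [measure_union hdisj (hg (measurableSet_singleton _)), h1, h2, ENNReal.add_halves]
  exact (mem_ae_iff_prob_eq_one ((hg (measurableSet_singleton _)).union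
    (hg (measurableSet_singleton _)))).2 hunion

lemma integral_eq_zero_of_measure_eq_half [IsProbabilityMeasure μ] {g : Ω → ℝ} (hg : Measurable g)
    (h1 : μ {ω | g ω = 1} = 1 / 2) (h2 : μ {ω | g ω = -1} = 1 / 2) : ∫ ω, g ω ∂μ = 0 := by
  have hA : MeasurableSet {ω | g ω = 1} := hg (measurableSet_singleton 1)
  have hB : MeasurableSet {ω | g ω = -1} := hg (measurableSet_singleton (-1))
  have hind : g =ᵐ[μ] {ω | g ω = 1}.indicator 1 - {ω | g ω = -1}.indicator 1 := by
    filter_upwards [ae_eq_one_or_eq_neg_one hg h1 h2] with ω hω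
    rcases hω with h | h <;> simp [Set.indicator, h] <;> norm_num
  rw [integral_congr_ae hind, integral_sub' ((integrable_const 1).indicator hA)
    ((integrable_const 1).indicator hB), integral_indicator_one hA, integral_indicator_one hB,
    measureReal_def, measureReal_def, h1, h2, sub_self]

end Measurable

section Signs

variable {Ω : Type*} [mΩ : MeasurableSpace Ω] {P : Measure Ω} {e : ℕ → Ω → ℝ}

/-- Rademacher variables, encoded as `e i ^ 2 = 1` a.s. with mean zero (equivalently
`P (e i = 1) = P (e i = -1) = 1/2`). -/
structure IsRademacherSeq (e : ℕ → Ω → ℝ) (P : Measure Ω) : Prop where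
  measurable : ∀ i, Measurable (e i)
  indep : iIndepFun e P
  sq_eq_one : ∀ i, ∀ᵐ ω ∂P, e i ω ^ 2 = 1
  integral_eq_zero : ∀ i, ∫ ω, e i ω ∂P = 0

namespace IsRademacherSeq

lemma of_measure_eq_half [IsProbabilityMeasure P] (hm : ∀ i, Measurable (e i))
    (hind : iIndepFun e P)
    (hhalf : ∀ i, P {ω | e i ω = 1} = 1 / 2 ∧ P {ω | e i ω = -1} = 1 / 2) :
    IsRademacherSeq e P where
  measurable := hm
  indep := hind
  sq_eq_one i := (ae_eq_one_or_eq_neg_one (hm i) (hhalf i).1 (hhalf i).2).mono fun ω h => by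
    rcases h with h | h <;> simp [h]
  integral_eq_zero i := integral_eq_zero_of_measure_eq_half (hm i) (hhalf i).1 (hhalf i).2

lemma abs_le_one (he : IsRademacherSeq e P) (i : ℕ) : ∀ᵐ ω ∂P, |e i ω| ≤ 1 :=
  (he.sq_eq_one i).mono fun _ h => (sq_le_one_iff_abs_le_one _).1 h.le

lemma integral_walsh_eq_zero [IsProbabilityMeasure P] (he : IsRademacherSeq e P) {S : Finset ℕ}
    (hS : S.Nonempty) : ∫ ω, walsh e S ω ∂P = 0 := by
  have hprod : ∫ ω, walsh e S ω ∂P = ∏ i ∈ S, ∫ ω, e i ω ∂P := by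
    simp only [walsh, ← Finset.prod_coe_sort S]
    exact (he.indep.precomp Subtype.val_injective).integral_fun_prod_eq_prod_integral
      fun i => (he.measurable i).aestronglyMeasurable
  obtain ⟨i, hi⟩ := hS
  rw [hprod, Finset.prod_eq_zero hi (he.integral_eq_zero i)]

lemma integral_walsh_mul_walsh [IsProbabilityMeasure P] (he : IsRademacherSeq e P)
    (S T : Finset ℕ) : ∫ ω, walsh e S ω * walsh e T ω ∂P = if S = T then 1 else 0 := by
  rw [integral_congr_ae ((ae_all_iff.2 he.sq_eq_one).mono fun ω hω => walsh_mul_walsh hω S T)]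
  split_ifs with hST
  · simp [hST]
  · exact he.integral_walsh_eq_zero (symmDiff_nonempty.2 hST)

def filtration (he : IsRademacherSeq e P) : Filtration ℕ mΩ :=
  Filtration.natural e fun i => (he.measurable i).stronglyMeasurable

lemma measurable_filtration (he : IsRademacherSeq e P) {i N : ℕ} (hi : i ≤ N) :
    Measurable[he.filtration N] (e i) :=
  measurable_iff_comap_le.2
    (le_iSup₂ (f := fun j (_ : j ≤ N) => MeasurableSpace.comap (e j) _) i hi)

/-- The Walsh functions outside `Iic N` are orthogonal to every `ℱ N`-measurable function, since
they split off a mean-zero factor independent of `ℱ N`. -/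
lemma integral_walsh_mul_eq_zero [IsProbabilityMeasure P] (he : IsRademacherSeq e P) {N : ℕ}
    {g : Ω → ℝ} (hg : StronglyMeasurable[he.filtration N] g) {S : Finset ℕ}
    (hS : ¬ S ⊆ Finset.Iic N) : ∫ ω, walsh e S ω * g ω ∂P = 0 := by
  set S₁ := S.filter (· ≤ N)
  set S₂ := S.filter fun i => ¬ i ≤ N
  have hS₂ : S₂.Nonempty := by
    obtain ⟨i, hiS, hiN⟩ := Finset.not_subset.1 hS
    exact ⟨i, Finset.mem_filter.2 ⟨hiS, by simpa using hiN⟩⟩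
  have hX : Measurable[he.filtration N] fun ω => walsh e S₁ ω * g ω :=
    (measurable_walsh fun i hi => he.measurable_filtration (Finset.mem_filter.1 hi).2).mul
      hg.measurable
  have hY : Measurable[⨆ i ∈ (S₂ : Set ℕ), MeasurableSpace.comap (e i) _] (walsh e S₂) :=
    measurable_walsh fun i hi => measurable_iff_comap_le.2
      (le_iSup₂ (f := fun j (_ : j ∈ (S₂ : Set ℕ)) => MeasurableSpace.comap (e j) _) i hi)
  have hindep : Indep (he.filtration N) (⨆ i ∈ (S₂ : Set ℕ), MeasurableSpace.comap (e i) _) P :=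
    indep_iSup_of_disjoint (fun i => (he.measurable i).comap_le) he.indep.iIndep
      (S := Set.Iic N) (Set.disjoint_left.2 fun i hi hi' => (Finset.mem_filter.1 hi').2 hi)
  have hXY : IndepFun (fun ω => walsh e S₁ ω * g ω) (walsh e S₂) P :=
    (IndepFun_iff_Indep _ _ _).2 (indep_of_indep_of_le_right
      (indep_of_indep_of_le_left hindep (measurable_iff_comap_le.1 hX))
      (measurable_iff_comap_le.1 hY))
  calc ∫ ω, walsh e S ω * g ω ∂P = ∫ ω, (walsh e S₁ ω * g ω) * walsh e S₂ ω ∂P := by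
        refine integral_congr_ae (.of_forall fun ω => ?_)
        simp only [walsh, S₁, S₂, ← Finset.prod_filter_mul_prod_filter_not S (· ≤ N)]
        ring
    _ = 0 := by
        rw [hXY.integral_fun_mul_eq_mul_integral
          (hX.mono (he.filtration.le N) le_rfl).aestronglyMeasurable
          (measurable_walsh fun i _ => he.measurable i).aestronglyMeasurable,
          he.integral_walsh_eq_zero hS₂, mul_zero]

end IsRademacherSeq

end Signs

section Kernel

variable {Ω Ω' : Type*} [MeasurableSpace Ω'] {P' : Measure Ω'} {e : ℕ → Ω → ℝ}
  {d : ℕ → Ω' → ℝ} {s : Finset ℕ}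

lemma lintegral_enorm_rieszProduct [IsProbabilityMeasure P'] (hdm : ∀ i, Measurable (d i))
    (hd : ∀ i, ∀ᵐ ω' ∂P', |d i ω'| ≤ 1)
    (hmean : ∀ S : Finset ℕ, S.Nonempty → ∫ ω', walsh d S ω' ∂P' = 0) {ω : Ω}
    (he : ∀ i, |e i ω| ≤ 1) : ∫⁻ ω', ‖rieszProduct e d s ω ω'‖ₑ ∂P' = 1 := by
  have hint S : Integrable (fun ω' => walsh e S ω * walsh d S ω') P' :=
    ((memLp_walsh hdm hd S 1).integrable le_rfl).const_mul _
  have hone : ∫ ω', rieszProduct e d s ω ω' ∂P' = 1 := by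
    simp_rw [rieszProduct_eq_sum]
    rw [integral_finsetSum _ fun S _ => hint S,
      Finset.sum_eq_single_of_mem ∅ (Finset.empty_mem_powerset s)]
    · simp
    · intro S _ hS
      rw [integral_const_mul, hmean S (Finset.nonempty_iff_ne_empty.2 hS), mul_zero]
  have hK : Integrable (rieszProduct e d s ω) P' := by
    simp_rw [funext (rieszProduct_eq_sum s ω)]
    exact integrable_finsetSum _ fun S _ => hint S
  have hnorm : (fun ω' => ‖rieszProduct e d s ω ω'‖) =ᵐ[P'] rieszProduct e d s ω :=
    (ae_all_iff.2 hd).mono fun ω' hω' => Real.norm_of_nonneg (rieszProduct_nonneg he hω')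
  rw [← ofReal_integral_norm_eq_lintegral_enorm hK, integral_congr_ae hnorm, hone,
    ENNReal.ofReal_one]

variable [MeasurableSpace Ω] {P : Measure Ω}

lemma measurable_rieszProduct (he : ∀ i, Measurable (e i)) (hd : ∀ i, Measurable (d i)) :
    Measurable (Function.uncurry (rieszProduct e d s)) :=
  Finset.measurable_fun_prod s fun i _ =>
    measurable_const.add (((he i).comp measurable_fst).mul ((hd i).comp measurable_snd))

lemma eLpNorm_one_integral_mul_le [SFinite P] [SFinite P'] {K : Ω → Ω' → ℝ} {f : Ω → ℝ}
    (hf : AEMeasurable f P) (hK : AEMeasurable (Function.uncurry K) (P.prod P'))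
    (hK1 : ∀ᵐ ω ∂P, ∫⁻ ω', ‖K ω ω'‖ₑ ∂P' ≤ 1) :
    eLpNorm (fun ω' => ∫ ω, f ω * K ω ω' ∂P) 1 P' ≤ eLpNorm f 1 P := by
  have hfK : AEMeasurable (Function.uncurry fun ω ω' => ‖f ω‖ₑ * ‖K ω ω'‖ₑ) (P.prod P') :=
    (hf.comp_quasiMeasurePreserving Measure.quasiMeasurePreserving_fst).enorm.mul hK.enorm
  simp only [eLpNorm_one_eq_lintegral_enorm]
  calc ∫⁻ ω', ‖∫ ω, f ω * K ω ω' ∂P‖ₑ ∂P'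
      ≤ ∫⁻ ω', ∫⁻ ω, ‖f ω‖ₑ * ‖K ω ω'‖ₑ ∂P ∂P' := by
        refine lintegral_mono fun ω' => (enorm_integral_le_lintegral_enorm _).trans_eq ?_
        simp_rw [enorm_mul]
    _ = ∫⁻ ω, ∫⁻ ω', ‖f ω‖ₑ * ‖K ω ω'‖ₑ ∂P' ∂P := (lintegral_lintegral_swap hfK).symm
    _ = ∫⁻ ω, ‖f ω‖ₑ * ∫⁻ ω', ‖K ω ω'‖ₑ ∂P' ∂P := by
        simp_rw [lintegral_const_mul' _ _ enorm_ne_top]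
    _ ≤ ∫⁻ ω, ‖f ω‖ₑ ∂P := lintegral_mono_ae (hK1.mono fun ω h => mul_le_of_le_one_right' h)

end Kernel

section Transfer

variable {Ω Ω' : Type*} [mΩ : MeasurableSpace Ω] [MeasurableSpace Ω'] {P : Measure Ω}
  {P' : Measure Ω'} {e : ℕ → Ω → ℝ} {d : ℕ → Ω' → ℝ}

noncomputable def walshTransfer (hW : ∀ S, MemLp (walsh e S) ∞ P) (hD : ∀ S, MemLp (walsh d S) 1 P')
    (s : Finset ℕ) : Lp ℝ 1 P →L[ℝ] Lp ℝ 1 P' :=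
  ∑ S ∈ s.powerset,
    ((ContinuousLinearMap.mul ℝ ℝ).lpPairing P ∞ 1 ((hW S).toLp _)).smulRight ((hD S).toLp _)

variable (hW : ∀ S, MemLp (walsh e S) ∞ P) (hD : ∀ S, MemLp (walsh d S) 1 P')

lemma walshTransfer_apply (s : Finset ℕ) (f : Lp ℝ 1 P) :
    walshTransfer hW hD s f = ∑ S ∈ s.powerset, (∫ ω, walsh e S ω * f ω ∂P) • (hD S).toLp _ := by
  simp only [walshTransfer, _root_.sum_apply, ContinuousLinearMap.smulRight_apply,
    ContinuousLinearMap.lpPairing_eq_integral, ContinuousLinearMap.mul_apply']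
  refine Finset.sum_congr rfl fun S _ => ?_
  congr 1
  exact integral_congr_ae (((hW S).coeFn_toLp).mul EventuallyEq.rfl)

lemma coeFn_walshTransfer_apply (s : Finset ℕ) (f : Lp ℝ 1 P) :
    walshTransfer hW hD s f =ᵐ[P'] fun ω' => ∫ ω, f ω * rieszProduct e d s ω ω' ∂P := by
  have hterm : ∀ᵐ ω' ∂P', ∀ S : Finset ℕ,
      ((∫ ω, walsh e S ω * f ω ∂P) • (hD S).toLp (walsh d S)) ω'
        = (∫ ω, walsh e S ω * f ω ∂P) * walsh d S ω' :=
    ae_all_iff.2 fun S =>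
      (Lp.coeFn_smul _ _).trans ((hD S).coeFn_toLp.mono fun ω' h => by simp [h])
  rw [walshTransfer_apply]
  filter_upwards [Lp.coeFn_fun_finsetSum s.powerset fun S =>
    (∫ ω, walsh e S ω * f ω ∂P) • (hD S).toLp (walsh d S), hterm] with ω' hsum hterm
  simp_rw [hsum, hterm, rieszProduct_eq_sum, Finset.mul_sum]
  rw [integral_finsetSum _ fun S _ =>
    (((L1.integrable_coeFn f).mul_of_top_right (hW S)).mul_const (walsh d S ω')).congr
      (.of_forall fun ω => by simp only [Pi.mul_apply]; ring)]
  refine Finset.sum_congr rfl fun S _ => ?_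
  rw [← integral_mul_const]
  exact integral_congr_ae (.of_forall fun ω => by ring)

lemma norm_walshTransfer_le [SFinite P] [IsProbabilityMeasure P'] (hem : ∀ i, Measurable (e i))
    (he : ∀ i, ∀ᵐ ω ∂P, |e i ω| ≤ 1) (hdm : ∀ i, Measurable (d i))
    (hd : ∀ i, ∀ᵐ ω' ∂P', |d i ω'| ≤ 1)
    (hmean : ∀ S : Finset ℕ, S.Nonempty → ∫ ω', walsh d S ω' ∂P' = 0) (s : Finset ℕ) :
    ‖walshTransfer hW hD s‖ ≤ 1 := by
  refine ContinuousLinearMap.opNorm_le_bound _ zero_le_one fun f => ?_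
  rw [one_mul, Lp.norm_def, Lp.norm_def, eLpNorm_congr_ae (coeFn_walshTransfer_apply hW hD s f)]
  refine ENNReal.toReal_mono (Lp.eLpNorm_ne_top f) (eLpNorm_one_integral_mul_le
    (Lp.aestronglyMeasurable f).aemeasurable (measurable_rieszProduct hem hdm).aemeasurable ?_)
  filter_upwards [ae_all_iff.2 he] with ω hω
  exact (lintegral_enorm_rieszProduct hdm hd hmean hω).le

lemma walshTransfer_walsh [IsProbabilityMeasure P] (he : IsRademacherSeq e P) {s S : Finset ℕ}
    (hS : S ⊆ s) (h : MemLp (walsh e S) 1 P) :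
    walshTransfer hW hD s (h.toLp _) = (hD S).toLp _ := by
  rw [walshTransfer_apply, Finset.sum_eq_single_of_mem S (Finset.mem_powerset.2 hS)]
  · rw [integral_mul_toLp h, he.integral_walsh_mul_walsh, if_pos rfl, one_smul]
  · intro T _ hT
    rw [integral_mul_toLp h, he.integral_walsh_mul_walsh, if_neg hT, zero_smul]

lemma walshTransfer_eq_of_le [IsProbabilityMeasure P] (he : IsRademacherSeq e P) {N M : ℕ}
    (hNM : N ≤ M) {g : Ω → ℝ} (hg : StronglyMeasurable[he.filtration N] g) (hgi : MemLp g 1 P) :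
    walshTransfer hW hD (Iic M) (hgi.toLp g) = walshTransfer hW hD (Iic N) (hgi.toLp g) := by
  simp only [walshTransfer_apply]
  refine (Finset.sum_subset (Finset.powerset_mono.2 (Finset.Iic_subset_Iic.2 hNM))
    fun S _ hS => ?_).symm
  rw [integral_mul_toLp hgi, he.integral_walsh_mul_eq_zero hg (mt Finset.mem_powerset.2 hS),
    zero_smul]

lemma walshTransfer_condExp [IsProbabilityMeasure P] (he : IsRademacherSeq e P) (N : ℕ)
    (f : Lp ℝ 1 P) :
    walshTransfer hW hD (Iic N)
      ((memLp_one_iff_integrable.2 integrable_condExp).toLp (P[f|he.filtration N]))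
      = walshTransfer hW hD (Iic N) f := by
  simp only [walshTransfer_apply]
  refine Finset.sum_congr rfl fun S hS => ?_
  have hWN : StronglyMeasurable[he.filtration N] (walsh e S) :=
    (measurable_walsh fun i hi =>
      he.measurable_filtration (Finset.mem_Iic.1 (Finset.mem_powerset.1 hS hi))).stronglyMeasurable
  rw [integral_mul_toLp,
    integral_mul_condExp (he.filtration.le N) hWN (c := 1)
      (by simpa using ae_abs_walsh_le_one he.abs_le_one S) (L1.integrable_coeFn f)]

/-- Lévy's upward theorem makes `N ↦ 𝔼[f | ℱ N]` Cauchy in `L¹`, and the partial transfers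
of `f` only see these conditional expectations. -/
lemma cauchySeq_walshTransfer [IsProbabilityMeasure P] [IsProbabilityMeasure P']
    (he : IsRademacherSeq e P) (hdm : ∀ i, Measurable (d i)) (hd : ∀ i, ∀ᵐ ω' ∂P', |d i ω'| ≤ 1)
    (hmean : ∀ S : Finset ℕ, S.Nonempty → ∫ ω', walsh d S ω' ∂P' = 0) (f : Lp ℝ 1 P) :
    CauchySeq fun N => walshTransfer hW hD (Iic N) f := by
  set g : ℕ → Lp ℝ 1 P := fun N =>
    (memLp_one_iff_integrable.2 integrable_condExp).toLp (P[f|he.filtration N])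
  have hg : CauchySeq g :=
    ((Lp.tendsto_Lp_iff_tendsto_eLpNorm'' _ _ _ (memLp_one_iff_integrable.2 integrable_condExp)).2
      (tendsto_eLpNorm_condExp _)).cauchySeq
  have hdist : ∀ N M, N ≤ M → dist (walshTransfer hW hD (Iic M) f)
      (walshTransfer hW hD (Iic N) f) ≤ dist (g M) (g N) := by
    intro N M hNM
    rw [← walshTransfer_condExp hW hD he M f, ← walshTransfer_condExp hW hD he N f,
      ← walshTransfer_eq_of_le hW hD he hNM stronglyMeasurable_condExp, dist_eq_norm,
      dist_eq_norm, ← map_sub]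
    exact (ContinuousLinearMap.le_opNorm _ _).trans (mul_le_of_le_one_left (norm_nonneg _)
      (norm_walshTransfer_le hW hD he.measurable he.abs_le_one hdm hd hmean _))
  rw [Metric.cauchySeq_iff'] at hg ⊢
  intro ε hε
  obtain ⟨N, hN⟩ := hg ε hε
  exact ⟨N, fun M hM => (hdist N M hM).trans_lt (hN M hM)⟩

end Transfer

theorem exists_norm_le_one_map_walsh {Ω Ω' : Type*} [MeasurableSpace Ω] [MeasurableSpace Ω']
    {P : Measure Ω} {P' : Measure Ω'} [IsProbabilityMeasure P] [IsProbabilityMeasure P']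
    {e : ℕ → Ω → ℝ} {d : ℕ → Ω' → ℝ} (he : IsRademacherSeq e P) (hdm : ∀ i, Measurable (d i))
    (hd : ∀ i, ∀ᵐ ω' ∂P', |d i ω'| ≤ 1)
    (hmean : ∀ S : Finset ℕ, S.Nonempty → ∫ ω', walsh d S ω' ∂P' = 0) :
    ∃ u : Lp ℝ 1 P →L[ℝ] Lp ℝ 1 P', ‖u‖ ≤ 1 ∧ ∀ (S : Finset ℕ) (h : MemLp (walsh e S) 1 P)
      (h' : MemLp (walsh d S) 1 P'), u (h.toLp _) = h'.toLp _ := by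
  have hW : ∀ S, MemLp (walsh e S) ∞ P := fun S => memLp_walsh he.measurable he.abs_le_one S ∞
  have hD : ∀ S, MemLp (walsh d S) 1 P' := fun S => memLp_walsh hdm hd S 1
  have hnorm N := norm_walshTransfer_le hW hD he.measurable he.abs_le_one hdm hd hmean (Iic N)
  choose F hF using fun f =>
    cauchySeq_tendsto_of_complete (cauchySeq_walshTransfer hW hD he hdm hd hmean f)
  refine ⟨continuousLinearMapOfTendsto (fun N => walshTransfer hW hD (Iic N))
    (tendsto_pi_nhds.2 hF), ?_, fun S h h' => ?_⟩
  · refine ContinuousLinearMap.opNorm_le_bound _ zero_le_one fun f =>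
      le_of_tendsto (hF f).norm (.of_forall fun N => ?_)
    exact ((ContinuousLinearMap.le_opNorm _ _).trans
      (mul_le_of_le_one_left (norm_nonneg _) (hnorm N))).trans_eq (one_mul _).symm
  · refine tendsto_nhds_unique (hF _) (tendsto_const_nhds.congr' ?_)
    filter_upwards [eventually_ge_atTop (S.sup id)] with N hN
    exact (walshTransfer_walsh hW hD he
      (fun i hi => Finset.mem_Iic.2 ((Finset.le_sup (f := id) hi).trans hN)) h).symm

end Rademacher

open Rademacher

theorem mds_one_dominated_by_rademacher_general {Ω' : Type} [mΩ' : MeasurableSpace Ω']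
    (P' : Measure Ω') [IsProbabilityMeasure P']
    {Ω : Type} [mΩ : MeasurableSpace Ω] (P : Measure Ω) [IsProbabilityMeasure P]
    (d : ℕ → Ω' → ℝ) (𝒜 : ℕ → MeasurableSpace Ω')
    (hmono : Monotone 𝒜) (hle : ∀ n, 𝒜 n ≤ mΩ')
    (hadapt : ∀ n, Measurable[𝒜 n] (d n))
    (hmds : ∀ n, P'[d (n + 1)|𝒜 n] =ᵐ[P'] 0)
    (hbdd : ∀ n, ∀ᵐ ω ∂P', |d n ω| ≤ 1)
    (hdmem : ∀ n, MemLp (d n) 1 P')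
    (ε : ℕ → Ω → ℝ) (hεmeas : ∀ n, 1 ≤ n → Measurable (ε n))
    (hεindep : iIndepFun (fun n => ε (n + 1)) P)
    (hεdist : ∀ n, 1 ≤ n → P {ω | ε n ω = 1} = 1 / 2 ∧ P {ω | ε n ω = -1} = 1 / 2)
    (hεmem : ∀ n, MemLp (ε n) 1 P) :
    ∃ u : Lp ℝ 1 P →L[ℝ] Lp ℝ 1 P',
      ‖u‖ = 1 ∧
      u ((memLp_const (1 : ℝ)).toLp (fun _ => (1 : ℝ)))
        = (memLp_const (1 : ℝ)).toLp (fun _ => (1 : ℝ)) ∧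
      ∀ n, 1 ≤ n → u ((hεmem n).toLp (ε n)) = (hdmem n).toLp (d n) := by
  have hε : IsRademacherSeq (fun n => ε (n + 1)) P :=
    .of_measure_eq_half (fun n => hεmeas _ n.succ_pos) hεindep fun n => hεdist _ n.succ_pos
  obtain ⟨u, hu, hwalsh⟩ := exists_norm_le_one_map_walsh hε (d := fun n => d (n + 1))
    (fun n => (hadapt _).mono (hle _) le_rfl) (fun n => hbdd _) fun S hS =>
      integral_walsh_eq_zero_of_condExp_eq_zero hmono hle hadapt hmds hbdd
        (fun n => (hdmem n).integrable le_rfl) hS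
  have hmap : ∀ S {f : Ω → ℝ} {g : Ω' → ℝ} (hf : MemLp f 1 P) (hg : MemLp g 1 P'),
      f = walsh (fun n => ε (n + 1)) S → g = walsh (fun n => d (n + 1)) S →
      u (hf.toLp f) = hg.toLp g := by
    rintro S f g hf hg rfl rfl
    exact hwalsh S hf hg
  have hone := hmap ∅ (memLp_const 1) (memLp_const 1) walsh_empty.symm walsh_empty.symm
  refine ⟨u, le_antisymm hu ?_, hone, fun n hn => ?_⟩
  · have h := u.le_opNorm ((memLp_const (1 : ℝ)).toLp fun _ => (1 : ℝ))
    rwa [hone, norm_toLp_one, norm_toLp_one, mul_one] at h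
  · obtain ⟨k, rfl⟩ := Nat.exists_eq_add_of_le' hn
    exact hmap {k} _ _ (walsh_singleton (e := fun n => ε (n + 1)) k).symm
      (walsh_singleton (e := fun n => d (n + 1)) k).symm

/-- Let `(d_n)_{n ≥ 0}` be a real-valued martingale difference sequence on
`(Ω', 𝒜', P')` with `𝒜_0` trivial and `|d_n| ≤ 1` a.s., and let `(ε_n)_{n ≥ 1}` be an i.i.d.
sequence of Rademacher variables on `(Ω, 𝒜, P)`. Then there is a bounded linear operator
`u : L¹(Ω, P) → L¹(Ω', P')` with `‖u‖ = 1`, `u(1) = 1` and `u(ε_n) = d_n` for all `n ≥ 1`;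
i.e. every `[-1,1]`-valued martingale difference sequence is `1`-dominated by the Rademacher
sequence. -/
theorem mds_one_dominated_by_rademacher {Ω' : Type} [mΩ' : MeasurableSpace Ω']
    (P' : Measure Ω') [IsProbabilityMeasure P']
    {Ω : Type} [mΩ : MeasurableSpace Ω] (P : Measure Ω) [IsProbabilityMeasure P]
    (d : ℕ → Ω' → ℝ) (𝒜 : ℕ → MeasurableSpace Ω')
    (hmono : Monotone 𝒜) (hle : ∀ n, 𝒜 n ≤ mΩ') (htriv : 𝒜 0 = ⊥)
    (hadapt : ∀ n, Measurable[𝒜 n] (d n))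
    (hmds : ∀ n, P'[d (n + 1)|𝒜 n] =ᵐ[P'] 0)
    (hbdd : ∀ n, ∀ᵐ ω ∂P', |d n ω| ≤ 1)
    (hdmem : ∀ n, MemLp (d n) 1 P')
    (ε : ℕ → Ω → ℝ) (hεmeas : ∀ n, 1 ≤ n → Measurable (ε n))
    (hεindep : iIndepFun (fun n => ε (n + 1)) P)
    (hεdist : ∀ n, 1 ≤ n → P {ω | ε n ω = 1} = 1 / 2 ∧ P {ω | ε n ω = -1} = 1 / 2)
    (hεmem : ∀ n, MemLp (ε n) 1 P) :
    ∃ u : Lp ℝ 1 P →L[ℝ] Lp ℝ 1 P',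
      ‖u‖ = 1 ∧
      u ((memLp_const (1 : ℝ)).toLp (fun _ => (1 : ℝ)))
        = (memLp_const (1 : ℝ)).toLp (fun _ => (1 : ℝ)) ∧
      ∀ n, 1 ≤ n → u ((hεmem n).toLp (ε n)) = (hdmem n).toLp (d n) :=
  mds_one_dominated_by_rademacher_general (mΩ' := mΩ') P' (mΩ := mΩ) P d 𝒜 hmono hle hadapt hmds
    hbdd hdmem ε hεmeas hεindep hεdist hεmem
end
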